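/- arXiv:2406.09369 — 8 statements merged into one kernel-verified Lean document; each statement's English description precedes it below -/
import Mathlib

section
/- If π is a permutation of {1,...,n} with at most one descent (a Grassmannian permutation), then π² has at most 3 descents. -/
/-- Number of descents of a permutation of `Fin n`
(indices `i` such that `π(i) > π(i+1)`). -/
def des {n : ℕ} (π : Equiv.Perm (Fin n)) : ℕ :=
  (Finset.univ.filter
    (fun i : Fin n => ∃ j : Fin n, (j : ℕ) = (i : ℕ) + 1 ∧ π j < π i)).card

lemma mono_aux {n : ℕ} (π : Equiv.Perm (Fin n)) :
    ∀ m : ℕ, ∀ x y : Fin n, (y : ℕ) = (x : ℕ) + m + 1 →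
    (∀ i : Fin n, (x : ℕ) ≤ (i : ℕ) → (i : ℕ) < (y : ℕ) →
      ¬ ∃ j : Fin n, (j : ℕ) = (i : ℕ) + 1 ∧ π j < π i) →
    π x < π y := by
  intro m
  induction m with
  | zero =>
    intro x y hy hno
    have hx := hno x le_rfl (by omega)
    push_neg at hx
    have h1 : π x ≤ π y := hx y (by omega)
    have hne : π x ≠ π y := fun hh => by
      have : x = y := π.injective hh
      subst this; omega
    exact lt_of_le_of_ne h1 hne
  | succ m ih =>
    intro x y hy hno
    have hylt := y.isLt
    set y' : Fin n := ⟨(x : ℕ) + m + 1, by omega⟩ with hy'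
    have hy'v : (y' : ℕ) = (x : ℕ) + m + 1 := rfl
    have h1 : π x < π y' := by
      apply ih x y' hy'v
      intro i hi1 hi2
      exact hno i hi1 (by omega)
    have h2 := hno y' (by omega) (by omega)
    push_neg at h2
    have h3 : π y' ≤ π y := h2 y (by omega)
    have hne : π y' ≠ π y := fun hh => by
      have : y' = y := π.injective hh
      rw [Fin.ext_iff] at this
      omega
    exact lt_trans h1 (lt_of_le_of_ne h3 hne)

lemma exists_descent {n : ℕ} (π : Equiv.Perm (Fin n)) {x y : Fin n}
    (hxy : x < y) (hle : π y ≤ π x) :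
    ∃ i : Fin n, (x : ℕ) ≤ (i : ℕ) ∧ (i : ℕ) < (y : ℕ) ∧
      ∃ j : Fin n, (j : ℕ) = (i : ℕ) + 1 ∧ π j < π i := by
  by_contra hc
  push_neg at hc
  have hxy' : (x : ℕ) < (y : ℕ) := hxy
  have := mono_aux π ((y : ℕ) - (x : ℕ) - 1) x y (by omega)
    (fun i hi1 hi2 hP => by
      obtain ⟨j, hj1, hj2⟩ := hP
      exact absurd hj2 (not_lt.mpr (hc i hi1 hi2 j hj1)))
  exact absurd hle (not_le.mpr this)

/-- The square of a Grassmannian permutation has at most 3 descents. -/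
theorem square_of_grassmannian_has_at_most_three_descents
    {n : ℕ} (π : Equiv.Perm (Fin n)) (h : des π ≤ 1) :
    des (π * π) ≤ 3 := by
  classical
  unfold des at *
  by_cases hD : (Finset.univ.filter
      (fun i : Fin n => ∃ j : Fin n, (j : ℕ) = (i : ℕ) + 1 ∧ π j < π i)).Nonempty
  · obtain ⟨d, hd⟩ := hD
    rw [Finset.mem_filter] at hd
    have uniq : ∀ a : Fin n, (∃ j : Fin n, (j : ℕ) = (a : ℕ) + 1 ∧ π j < π a) → a = d := by
      intro a ha
      have := Finset.card_le_one.mp h a (Finset.mem_filter.mpr ⟨Finset.mem_univ _, ha⟩)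
        d (Finset.mem_filter.mpr ⟨Finset.mem_univ _, hd.2⟩)
      exact this
    -- crossing uniqueness helper
    have cross : ∀ a b : Fin n, π a ≤ d → (∀ ja : Fin n, (ja : ℕ) = (a : ℕ) + 1 → d < π ja) →
        π b ≤ d → (a : ℕ) < (b : ℕ) → ((d : ℕ) ≤ (a : ℕ) ∨ (b : ℕ) ≤ (d : ℕ)) → False := by
      intro a b ha hja hb hab hside
      have hbn := b.isLt
      set ja : Fin n := ⟨(a : ℕ) + 1, by omega⟩ with hja'
      have hjav : (ja : ℕ) = (a : ℕ) + 1 := rfl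
      have hdja : d < π ja := hja ja hjav
      by_cases heq : (ja : ℕ) = (b : ℕ)
      · have : ja = b := Fin.ext heq
        rw [this] at hdja
        exact absurd hb (not_le.mpr hdja)
      · have hlt : ja < b := by
          rw [Fin.lt_def]; simp only [hja']; omega
        by_cases hmono : π ja < π b
        · exact absurd hb (not_le.mpr (lt_trans hdja hmono))
        · obtain ⟨e, he1, he2, heP⟩ := exists_descent π hlt (not_lt.mp hmono)
          have : e = d := uniq e heP
          subst this
          omega
    -- the two crossing sets
    set C₁ : Finset (Fin n) := Finset.univ.filter
      (fun i : Fin n => (i : ℕ) < (d : ℕ) ∧ π i ≤ d ∧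
        ∃ j : Fin n, (j : ℕ) = (i : ℕ) + 1 ∧ d < π j) with hC₁
    set C₂ : Finset (Fin n) := Finset.univ.filter
      (fun i : Fin n => (d : ℕ) < (i : ℕ) ∧ π i ≤ d ∧
        ∃ j : Fin n, (j : ℕ) = (i : ℕ) + 1 ∧ d < π j) with hC₂
    have hC₁card : C₁.card ≤ 1 := by
      rw [Finset.card_le_one]
      intro a hA b hB
      rw [hC₁, Finset.mem_filter] at hA hB
      obtain ⟨-, ha1, ha2, ja, hja1, hja2⟩ := hA
      obtain ⟨-, hb1, hb2, jb, hjb1, hjb2⟩ := hB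
      by_contra hne
      rcases lt_or_gt_of_ne (fun hv => hne (Fin.ext hv) : (a : ℕ) ≠ (b : ℕ)) with hl | hl
      · exact cross a b ha2 (fun x hx => by rwa [show x = ja from Fin.ext (by omega)])
          hb2 hl (Or.inr (by omega))
      · exact cross b a hb2 (fun x hx => by rwa [show x = jb from Fin.ext (by omega)])
          ha2 hl (Or.inr (by omega))
    have hC₂card : C₂.card ≤ 1 := by
      rw [Finset.card_le_one]
      intro a hA b hB
      rw [hC₂, Finset.mem_filter] at hA hB
      obtain ⟨-, ha1, ha2, ja, hja1, hja2⟩ := hA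
      obtain ⟨-, hb1, hb2, jb, hjb1, hjb2⟩ := hB
      by_contra hne
      rcases lt_or_gt_of_ne (fun hv => hne (Fin.ext hv) : (a : ℕ) ≠ (b : ℕ)) with hl | hl
      · exact cross a b ha2 (fun x hx => by rwa [show x = ja from Fin.ext (by omega)])
          hb2 hl (Or.inl (by omega))
      · exact cross b a hb2 (fun x hx => by rwa [show x = jb from Fin.ext (by omega)])
          ha2 hl (Or.inl (by omega))
    have hsub : (Finset.univ.filter
        (fun i : Fin n => ∃ j : Fin n, (j : ℕ) = (i : ℕ) + 1 ∧ (π * π) j < (π * π) i))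
        ⊆ insert d (C₁ ∪ C₂) := by
      intro i hi
      rw [Finset.mem_filter] at hi
      obtain ⟨-, j, hj1, hj2⟩ := hi
      simp only [Equiv.Perm.mul_apply] at hj2
      have hij : i ≠ j := fun hh => by subst hh; omega
      by_cases hcase : π j < π i
      · exact Finset.mem_insert.mpr (Or.inl (uniq i ⟨j, hj1, hcase⟩))
      · have hπij : π i < π j := lt_of_le_of_ne (not_lt.mp hcase)
          (fun hh => hij (π.injective hh))
        obtain ⟨e, he1, he2, heP⟩ := exists_descent π hπij (le_of_lt hj2)
        have hed : e = d := uniq e heP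
        subst hed
        have hπid : π i ≤ e := by rw [Fin.le_def]; omega
        have hdπj : e < π j := by rw [Fin.lt_def]; omega
        rcases lt_trichotomy (i : ℕ) (e : ℕ) with hl | hl | hl
        · exact Finset.mem_insert.mpr (Or.inr (Finset.mem_union_left _
            (Finset.mem_filter.mpr ⟨Finset.mem_univ _, hl, hπid, j, hj1, hdπj⟩)))
        · exact Finset.mem_insert.mpr (Or.inl (Fin.ext hl))
        · exact Finset.mem_insert.mpr (Or.inr (Finset.mem_union_right _
            (Finset.mem_filter.mpr ⟨Finset.mem_univ _, hl, hπid, j, hj1, hdπj⟩)))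
    calc (Finset.univ.filter
        (fun i : Fin n => ∃ j : Fin n, (j : ℕ) = (i : ℕ) + 1 ∧ (π * π) j < (π * π) i)).card
        ≤ (insert d (C₁ ∪ C₂)).card := Finset.card_le_card hsub
      _ ≤ (C₁ ∪ C₂).card + 1 := Finset.card_insert_le _ _
      _ ≤ (C₁.card + C₂.card) + 1 := by
          have := Finset.card_union_le C₁ C₂; omega
      _ ≤ 3 := by omega
  · -- no descents: π² has none either
    rw [Finset.not_nonempty_iff_eq_empty] at hD
    have hempty : (Finset.univ.filter
        (fun i : Fin n => ∃ j : Fin n, (j : ℕ) = (i : ℕ) + 1 ∧ (π * π) j < (π * π) i)) = ∅ := by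
      rw [Finset.filter_eq_empty_iff]
      rintro i - ⟨j, hj1, hj2⟩
      simp only [Equiv.Perm.mul_apply] at hj2
      have hij : i < j := by rw [Fin.lt_def]; omega
      by_cases hcase : π j < π i
      · have : i ∈ (∅ : Finset (Fin n)) := by
          rw [← hD, Finset.mem_filter]; exact ⟨Finset.mem_univ _, j, hj1, hcase⟩
        simp at this
      · have hπij : π i < π j := lt_of_le_of_ne (not_lt.mp hcase)
          (fun hh => (Fin.lt_iff_val_lt_val.mp hij).ne (congrArg Fin.val (π.injective hh)))
        obtain ⟨e, -, -, heP⟩ := exists_descent π hπij (le_of_lt hj2)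
        have : e ∈ (∅ : Finset (Fin n)) := by
          rw [← hD, Finset.mem_filter]; exact ⟨Finset.mem_univ _, heP⟩
        simp at this
    rw [hempty]
    simp
end

section
/- For n ≥ 1, the number of Grassmannian permutations in S_n that are involutions (i.e., π² is the identity) is ⌊n²/4⌋ + 1. -/
open Finset


/-- block-swap function on ℕ -/
def g (a t i : ℕ) : ℕ :=
  if a ≤ i ∧ i < a + t then i + t
  else if a + t ≤ i ∧ i < a + 2*t then i - t
  else i

lemma g_invol (a t : ℕ) : Function.Involutive (g a t) := by
  intro i; unfold g; split_ifs <;> omega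

lemma g_lt {n : ℕ} (a t : ℕ) (h : a + 2*t ≤ n) {i : ℕ} (hi : i < n) : g a t i < n := by
  unfold g; split_ifs <;> omega

/-- the block-swap permutation -/
def sigma (n a t : ℕ) : Equiv.Perm (Fin n) :=
  if h : a + 2*t ≤ n then
    { toFun := fun i => ⟨g a t i, g_lt a t h i.isLt⟩
      invFun := fun i => ⟨g a t i, g_lt a t h i.isLt⟩
      left_inv := fun i => Fin.ext (g_invol a t i)
      right_inv := fun i => Fin.ext (g_invol a t i) }
  else 1

lemma sigma_apply {n a t : ℕ} (h : a + 2*t ≤ n) (i : Fin n) :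
    (sigma n a t i : ℕ) = g a t i := by
  unfold sigma; rw [dif_pos h]; rfl

lemma sigma_invol {n a t : ℕ} (h : a + 2*t ≤ n) : sigma n a t * sigma n a t = 1 := by
  ext i
  simp only [Equiv.Perm.mul_apply, Equiv.Perm.one_apply]
  have := sigma_apply h i
  have h2 := sigma_apply h (sigma n a t i)
  rw [this] at h2
  rw [h2, g_invol a t i]

lemma sigma_zero (n : ℕ) : sigma n 0 0 = 1 := by
  ext i
  rw [sigma_apply (by omega)]
  simp [g]

lemma des_sigma {n a t : ℕ} (h : a + 2*t ≤ n) : des (sigma n a t) ≤ 1 := by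
  unfold des
  apply Finset.card_le_one.mpr
  intro i hi i' hi'
  simp only [mem_filter, mem_univ, true_and] at hi hi'
  have key : ∀ k : Fin n, (∃ j : Fin n, (j : ℕ) = (k : ℕ) + 1 ∧
      sigma n a t j < sigma n a t k) → (k : ℕ) = a + t - 1 := by
    rintro k ⟨j, hj1, hj2⟩
    rw [Fin.lt_def, sigma_apply h, sigma_apply h, hj1] at hj2
    unfold g at hj2
    split_ifs at hj2 <;> omega
  exact Fin.ext ((key i hi).trans (key i' hi').symm)



lemma chain (q : ℕ → ℕ) (lo hi : ℕ) (h : ∀ i, lo ≤ i → i + 1 ≤ hi → q i < q (i+1)) :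
    ∀ k i, lo ≤ i → i + k ≤ hi → q i + k ≤ q (i + k) := by
  intro k
  induction k with
  | zero => intro i _ _; simp
  | succ k ih =>
      intro i hi hk
      have h1 := ih i hi (by omega)
      have h2 := h (i+k) (by omega) (by omega)
      have h3 : i + (k+1) = (i+k)+1 := by omega
      rw [h3]; omega

lemma key (n d : ℕ) (q : ℕ → ℕ)
    (hq : ∀ i, q (q i) = i)
    (hlt : ∀ i, i < n → q i < n)
    (hd : d + 1 < n)
    (hdes : q (d+1) < q d)
    (hmono : ∀ i, i + 1 < n → i ≠ d → q i < q (i+1)) :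
    ∃ a t, 1 ≤ t ∧ a + 2*t ≤ n ∧ ∀ i, i < n → q i = g a t i := by
  have mono1 : ∀ i j, i ≤ j → j ≤ d → q i + (j - i) ≤ q j := by
    intro i j hij hjd
    have := chain q 0 d (fun i _ h2 => hmono i (by omega) (by omega)) (j - i) i (by omega) (by omega)
    have e : i + (j - i) = j := by omega
    rwa [e] at this
  have mono2 : ∀ i j, d < i → i ≤ j → j < n → q i + (j - i) ≤ q j := by
    intro i j hdi hij hjn
    have := chain q (d+1) (n-1) (fun i h1 h2 => hmono i (by omega) (by omega)) (j - i) i (by omega) (by omega)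
    have e : i + (j - i) = j := by omega
    rwa [e] at this
  have bnd1 : ∀ i, i ≤ d → i ≤ q i := by
    intro i hi; have := mono1 0 i (by omega) hi; omega
  have bnd2 : ∀ i, d < i → i < n → q i ≤ i := by
    intro i h1 h2
    have := mono2 i (n-1) h1 (by omega) (by omega)
    have := hlt (n-1) (by omega)
    omega
  have fix1 : ∀ i, i ≤ d → q i ≤ d → q i = i := by
    intro i h1 h2
    have := bnd1 i h1
    have := bnd1 (q i) h2
    have := hq i
    omega
  have fix2 : ∀ i, d < i → i < n → d < q i → q i = i := by
    intro i h1 h2 h3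
    have := bnd2 i h1 h2
    have := bnd2 (q i) h3 (hlt i h2)
    have := hq i
    omega
  have hqd : d < q d := by
    by_contra hcon
    have h1 : q d = d := fix1 d le_rfl (by omega)
    have h2 := hq (d+1)
    have h3 := mono1 (q (d+1)) d (by omega) le_rfl
    omega
  have hqdlt : q d < n := hlt d (by omega)
  have ha : q (d+1) ≤ d := by
    rcases eq_or_lt_of_le (Nat.succ_le_of_lt hqd) with h1 | h1
    · have := hq d; rw [← h1] at this; omega
    · have h2 := mono2 (d+1) (q d) (by omega) (by omega) hqdlt
      have h3 := hq d
      omega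
  set a := q (d+1) with ha_def
  set t := d + 1 - a with ht_def
  have pair : ∀ s, s ≤ d - a → q (d + 1 + s) = a + s ∧ q (a + s) = d + 1 + s := by
    intro s
    induction s with
    | zero =>
        intro _
        constructor
        · simp [ha_def]
        · have := hq (d+1); simpa using this
    | succ s ih =>
        intro hs
        obtain ⟨e1, e2⟩ := ih (by omega)
        have h1 : a + s + 1 ≤ d := by omega
        have h2 : d + s + 2 ≤ q (a+s+1) := by
          have := mono1 (a+s) (a+s+1) (by omega) h1
          omega
        have h2n : q (a+s+1) < n := hlt _ (by omega)
        have h3 : q (q (a+s+1)) = a+s+1 := hq _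
        have hn2 : d+s+2 < n := by omega
        have h5 : a + s < q (d+s+2) := by
          have := mono2 (d+1+s) (d+s+2) (by omega) (by omega) hn2
          omega
        have main : q (d+s+2) = a+s+1 := by
          by_contra hne
          rcases Nat.lt_or_ge d (q (d+s+2)) with hcase | hcase
          · have hfix := fix2 (d+s+2) (by omega) hn2 hcase
            have h6 : q (a+s+1) ≠ d+s+2 := by
              intro hcontra
              rw [hcontra] at h3
              omega
            have h7 := mono2 (d+s+2) (q (a+s+1)) (by omega) (by omega) h2n
            rw [h3] at h7
            omega
          · have h8 := mono1 (a+s+1) (q (d+s+2)) (by omega) hcase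
            have h9 := hq (d+s+2)
            omega
        constructor
        · have e : d + 1 + (s+1) = d+s+2 := by omega
          rw [e]; exact main
        · have := hq (d+s+2)
          rw [main] at this
          have e : a + (s+1) = a+s+1 := by omega
          rw [e, this]; omega
  have qd_eq : q d = d + t := by
    have := (pair (d - a) le_rfl).2
    have e : a + (d - a) = d := by omega
    rw [e] at this
    omega
  refine ⟨a, t, by omega, by omega, ?_⟩
  intro i hi
  unfold g
  split_ifs with h1 h2
  · obtain ⟨_, e⟩ := pair (i - a) (by omega)
    have e2 : a + (i - a) = i := by omega
    rw [e2] at e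
    omega
  · obtain ⟨e, _⟩ := pair (i - d - 1) (by omega)
    have e2 : d + 1 + (i - d - 1) = i := by omega
    rw [e2] at e
    omega
  · -- i < a or i ≥ a + 2t
    rcases Nat.lt_or_ge i a with hia | hia
    · by_contra hne
      have hgt : d < q i := by
        rcases Nat.lt_or_ge d (q i) with h' | h'
        · exact h'
        · exact absurd (fix1 i (by omega) h') (by omega)
      have hqin : q i < n := hlt i hi
      rcases le_or_gt (q i) (q d) with hc | hc
      · obtain ⟨e, _⟩ := pair (q i - d - 1) (by omega)
        have e2 : d + 1 + (q i - d - 1) = q i := by omega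
        rw [e2] at e
        have := hq i
        omega
      · have := mono2 (q d) (q i) hqd (by omega) hqin
        have := hq d
        have := hq i
        omega
    · by_contra hne
      have hle : q i ≤ d := by
        rcases le_or_gt (q i) d with h' | h'
        · exact h'
        · exact absurd (fix2 i (by omega) hi h') (by omega)
      have := mono2 (q d) i hqd (by omega) hi
      have := hq d
      omega


def S (n : ℕ) : Finset (ℕ × ℕ) :=
  ((range (n+1)) ×ˢ (range (n+1))).filter (fun p => p.1 + 2*p.2 ≤ n ∧ 1 ≤ p.2)

def T (n : ℕ) : Finset (ℕ × ℕ) :=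
  ((range (n+1)) ×ˢ (range (n+1))).filter (fun p => p.1 + 2*p.2 ≤ n ∧ (p.2 = 0 → p.1 = 0))

lemma mem_S {n : ℕ} {p : ℕ × ℕ} : p ∈ S n ↔ p.1 + 2*p.2 ≤ n ∧ 1 ≤ p.2 := by
  obtain ⟨x, y⟩ := p
  simp only [S, mem_filter, mem_product, mem_range]
  omega

lemma mem_T {n : ℕ} {p : ℕ × ℕ} : p ∈ T n ↔ p.1 + 2*p.2 ≤ n ∧ (p.2 = 0 → p.1 = 0) := by
  obtain ⟨x, y⟩ := p
  simp only [T, mem_filter, mem_product, mem_range]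
  omega

lemma card_S (n : ℕ) : (S n).card = n^2/4 := by
  induction n with
  | zero =>
      have : S 0 = ∅ := by
        ext p; simp only [mem_S, notMem_empty, iff_false]; omega
      simp [this]
  | succ n ih =>
      have hsplit : S (n+1) = S n ∪ (Icc 1 ((n+1)/2)).image (fun t => (n+1-2*t, t)) := by
        ext ⟨x, y⟩
        simp only [mem_S, mem_union, mem_image, mem_Icc, Prod.mk.injEq]
        constructor
        · rintro ⟨h1, h2⟩
          rcases Nat.lt_or_ge (x + 2*y) (n+1) with h | h
          · exact Or.inl ⟨by omega, h2⟩
          · exact Or.inr ⟨y, by omega, by omega, rfl⟩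
        · rintro (⟨h1, h2⟩ | ⟨t, ⟨ht1, ht2⟩, e1, e2⟩) <;> omega
      have hdisj : Disjoint (S n) ((Icc 1 ((n+1)/2)).image (fun t => (n+1-2*t, t))) := by
        rw [Finset.disjoint_left]
        rintro ⟨x, y⟩ hx hy
        simp only [mem_S] at hx
        simp only [mem_image, mem_Icc, Prod.mk.injEq] at hy
        obtain ⟨t, ⟨ht1, ht2⟩, e1, e2⟩ := hy
        omega
      have hinj : Set.InjOn (fun t => (n+1-2*t, t)) (Icc 1 ((n+1)/2)) := by
        intro a _ b _ h
        simpa using congrArg Prod.snd h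
      rw [hsplit, Finset.card_union_of_disjoint hdisj, ih,
        Finset.card_image_of_injOn hinj, Nat.card_Icc]
      rcases Nat.even_or_odd n with ⟨k, hk⟩ | ⟨k, hk⟩ <;> subst hk
      · have h1 : (k+k+1)^2 = 4*(k^2)+4*k+1 := by ring
        have h2 : (k+k)^2 = 4*(k^2) := by ring
        rw [h1, h2]
        generalize k^2 = m
        omega
      · have h1 : (2*k+1+1)^2 = 4*(k^2)+8*k+4 := by ring
        have h2 : (2*k+1)^2 = 4*(k^2)+4*k+1 := by ring
        rw [h1, h2]
        generalize k^2 = m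
        omega

lemma card_T (n : ℕ) : (T n).card = n^2/4 + 1 := by
  have h : T n = insert (0,0) (S n) := by
    ext ⟨x, y⟩
    simp only [mem_T, mem_insert, mem_S, Prod.mk.injEq]
    omega
  rw [h, Finset.card_insert_of_notMem (by simp [mem_S]), card_S]

lemma perm_eq_sigma {n : ℕ} (π : Equiv.Perm (Fin n)) (h1 : des π ≤ 1) (h2 : π * π = 1) :
    ∃ a t, a + 2*t ≤ n ∧ (t = 0 → a = 0) ∧ π = sigma n a t := by
  have hinv : ∀ x : Fin n, π (π x) = x := by
    intro x
    have := congrArg (fun σ : Equiv.Perm (Fin n) => σ x) h2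
    simpa using this
  set q : ℕ → ℕ := fun i => if h : i < n then ((π ⟨i,h⟩ : Fin n) : ℕ) else i with hq_def
  have hqval : ∀ (i : ℕ) (h : i < n), q i = π ⟨i, h⟩ := fun i h => dif_pos h
  have hlt : ∀ i, i < n → q i < n := by
    intro i h; rw [hqval i h]; exact (π ⟨i,h⟩).isLt
  have hq : ∀ i, q (q i) = i := by
    intro i
    by_cases h : i < n
    · rw [hqval i h, hqval _ (π ⟨i,h⟩).isLt]
      have e : (⟨(π ⟨i,h⟩ : Fin n), (π ⟨i,h⟩).isLt⟩ : Fin n) = π ⟨i,h⟩ := rfl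
      rw [e, hinv]
    · have e : q i = i := dif_neg h
      rw [e, e]
  by_cases hP : ∃ i : Fin n, ∃ j : Fin n, (j : ℕ) = (i : ℕ) + 1 ∧ π j < π i
  · obtain ⟨i₀, j, hj1, hj2⟩ := hP
    set d : ℕ := (i₀ : ℕ) with hd_def
    have hd : d + 1 < n := hj1 ▸ j.isLt
    have hdes : q (d+1) < q d := by
      rw [hqval (d+1) hd, hqval d (by omega)]
      have ej : j = ⟨d+1, hd⟩ := Fin.ext hj1
      have ei : i₀ = ⟨d, by omega⟩ := Fin.ext rfl
      rw [← ej, ← ei]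
      exact hj2
    have hmono : ∀ i, i + 1 < n → i ≠ d → q i < q (i+1) := by
      intro i hi hne
      have hnotdes : ¬ π ⟨i+1, hi⟩ < π ⟨i, by omega⟩ := by
        intro hlt'
        have hmem : (⟨i, by omega⟩ : Fin n) ∈ Finset.univ.filter
            (fun i : Fin n => ∃ j : Fin n, (j : ℕ) = (i : ℕ) + 1 ∧ π j < π i) := by
          simp only [mem_filter, mem_univ, true_and]
          exact ⟨⟨i+1, hi⟩, rfl, hlt'⟩
        have hmem0 : i₀ ∈ Finset.univ.filter
            (fun i : Fin n => ∃ j : Fin n, (j : ℕ) = (i : ℕ) + 1 ∧ π j < π i) := by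
          simp only [mem_filter, mem_univ, true_and]
          exact ⟨j, hj1, hj2⟩
        have := Finset.card_le_one.mp h1 _ hmem _ hmem0
        exact hne (by rw [hd_def]; exact congrArg Fin.val this)
      have hne2 : π ⟨i, by omega⟩ ≠ π ⟨i+1, hi⟩ := by
        intro e
        have := π.injective e
        simp only [Fin.mk.injEq] at this
        omega
      rw [hqval i (by omega), hqval (i+1) hi]
      have := lt_of_le_of_ne (not_lt.mp hnotdes) hne2
      exact this
    obtain ⟨a, t, ht, hb, hf⟩ := key n d q hq hlt hd hdes hmono
    refine ⟨a, t, hb, fun h0 => by omega, ?_⟩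
    ext x
    rw [sigma_apply hb]
    rw [← hf x.val x.isLt]
    exact (hqval x.val x.isLt).symm
  · push_neg at hP
    refine ⟨0, 0, by omega, fun _ => rfl, ?_⟩
    rw [sigma_zero]
    have hm : ∀ i, i + 1 < n → q i < q (i+1) := by
      intro i hi
      have hnotdes := hP ⟨i, by omega⟩ ⟨i+1, hi⟩ rfl
      have hne2 : π ⟨i, by omega⟩ ≠ π ⟨i+1, hi⟩ := by
        intro e
        have := π.injective e
        simp only [Fin.mk.injEq] at this
        omega
      rw [hqval i (by omega), hqval (i+1) hi]
      exact Fin.lt_def.mp (lt_of_le_of_ne hnotdes hne2)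
    have hid : ∀ i, i < n → q i = i := by
      intro i hi
      have c1 := chain q 0 (n-1) (fun k _ hk => hm k (by omega)) i 0 (by omega) (by omega)
      have c2 := chain q 0 (n-1) (fun k _ hk => hm k (by omega)) (n-1-i) i (by omega) (by omega)
      have := hlt (i + (n-1-i)) (by omega)
      simp only [Nat.zero_add] at c1
      omega
    ext x
    simp only [Equiv.Perm.one_apply]
    have := hid x.val x.isLt
    rw [hqval x.val x.isLt] at this
    exact this


/-- The number of Grassmannian involutions in `S_n` is `⌊n²/4⌋ + 1`. -/
theorem count_grassmannian_involutions (n : ℕ) (hn : 1 ≤ n) :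
    (Finset.univ.filter (fun π : Equiv.Perm (Fin n) =>
        des π ≤ 1 ∧ π * π = 1)).card = n ^ 2 / 4 + 1 := by
  have hset : Finset.univ.filter (fun π : Equiv.Perm (Fin n) => des π ≤ 1 ∧ π * π = 1)
      = (T n).image (fun p => sigma n p.1 p.2) := by
    ext π
    simp only [mem_filter, mem_univ, true_and, mem_image]
    constructor
    · rintro ⟨hd1, hd2⟩
      obtain ⟨a, t, hb, h0, he⟩ := perm_eq_sigma π hd1 hd2
      exact ⟨(a, t), mem_T.mpr ⟨hb, h0⟩, he.symm⟩
    · rintro ⟨⟨a, t⟩, hp, rfl⟩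
      have hb := (mem_T.mp hp).1
      exact ⟨des_sigma hb, sigma_invol hb⟩
  have hinj : Set.InjOn (fun p : ℕ × ℕ => sigma n p.1 p.2) ↑(T n) := by
    rintro ⟨a, t⟩ hp ⟨a', t'⟩ hp' he
    obtain ⟨hb, h0⟩ := mem_T.mp (Finset.mem_coe.mp hp)
    obtain ⟨hb', h0'⟩ := mem_T.mp (Finset.mem_coe.mp hp')
    have hev : ∀ i, i < n → g a t i = g a' t' i := by
      intro i hi
      have := congrArg (fun σ : Equiv.Perm (Fin n) => ((σ ⟨i, hi⟩ : Fin n) : ℕ)) he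
      simpa [sigma_apply hb, sigma_apply hb'] using this
    simp only [Prod.mk.injEq]
    rcases Nat.eq_zero_or_pos t with ht | ht <;> rcases Nat.eq_zero_or_pos t' with ht' | ht'
    · subst ht; subst ht'
      exact ⟨(h0 rfl).trans (h0' rfl).symm, rfl⟩
    · exfalso
      have := hev a' (by omega)
      have h00 := h0 ht
      unfold g at this; split_ifs at this <;> omega
    · exfalso
      have := hev a (by omega)
      have h00 := h0' ht'
      unfold g at this; split_ifs at this <;> omega
    · have haa : a = a' := by
        rcases lt_trichotomy a a' with h | h | h
        · have := hev a (by omega)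
          unfold g at this; split_ifs at this <;> omega
        · exact h
        · have := hev a' (by omega)
          unfold g at this; split_ifs at this <;> omega
      subst haa
      refine ⟨rfl, ?_⟩
      have := hev a (by omega)
      unfold g at this; split_ifs at this <;> omega
  rw [hset, Finset.card_image_of_injOn hinj, card_T]
end

section
/- For n ≥ 2, the number of Grassmannian permutations π ∈ S_n such that π² is also Grassmannian equals C(n+1, 3) + 1. -/
open Finset


/-- rotation-by-k function on the interval [a,b], identity elsewhere -/
def rotFun (a b k x : ℕ) : ℕ :=
  if a ≤ x ∧ x ≤ b then a + ((x - a + k) % (b - a + 1)) else x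

lemma rotFun_out {a b k x : ℕ} (h : ¬ (a ≤ x ∧ x ≤ b)) : rotFun a b k x = x := by
  simp [rotFun, h]

lemma rotFun_in {a b k x : ℕ} (h1 : a ≤ x) (h2 : x ≤ b) :
    rotFun a b k x = a + ((x - a + k) % (b - a + 1)) := by
  simp [rotFun, h1, h2]

lemma rotFun_mem {a b k x : ℕ} (h1 : a ≤ x) (h2 : x ≤ b) :
    a ≤ rotFun a b k x ∧ rotFun a b k x ≤ b := by
  rw [rotFun_in h1 h2]
  have := Nat.mod_lt (x - a + k) (show 0 < b - a + 1 by omega)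
  omega

lemma mod_cancel {m k u v : ℕ} (hu : u < m) (hv : v < m)
    (h : (u + k) % m = (v + k) % m) : u = v := by
  have h1 : u % m = v % m := by
    have : (u + k) ≡ (v + k) [MOD m] := h
    have := Nat.ModEq.add_right_cancel' k this
    exact this
  rwa [Nat.mod_eq_of_lt hu, Nat.mod_eq_of_lt hv] at h1

lemma rotFun_inj {a b k x y : ℕ} (h : rotFun a b k x = rotFun a b k y) : x = y := by
  by_cases hx : a ≤ x ∧ x ≤ b
  · have hx' := rotFun_mem (k := k) hx.1 hx.2
    by_cases hy : a ≤ y ∧ y ≤ b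
    · rw [rotFun_in hx.1 hx.2, rotFun_in hy.1 hy.2] at h
      have h2 : (x - a + k) % (b - a + 1) = (y - a + k) % (b - a + 1) := by omega
      have := mod_cancel (m := b - a + 1) (show x - a < b - a + 1 by omega)
        (show y - a < b - a + 1 by omega) h2
      omega
    · rw [rotFun_out hy] at h; omega
  · rw [rotFun_out hx] at h
    by_cases hy : a ≤ y ∧ y ≤ b
    · have hy' := rotFun_mem (k := k) hy.1 hy.2; omega
    · rw [rotFun_out hy] at h; omega

lemma rotFun_comp {a b k x : ℕ} :
    rotFun a b k (rotFun a b k x) = rotFun a b (k + k) x := by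
  by_cases hx : a ≤ x ∧ x ≤ b
  · have hx' := rotFun_mem (k := k) hx.1 hx.2
    rw [rotFun_in hx.1 hx.2] at hx' ⊢
    rw [rotFun_in hx'.1 hx'.2, rotFun_in hx.1 hx.2]
    congr 1
    have h1 : a + (x - a + k) % (b - a + 1) - a = (x - a + k) % (b - a + 1) := by omega
    rw [h1, Nat.mod_add_mod]
    congr 1; omega
  · rw [rotFun_out hx, rotFun_out hx, rotFun_out hx]

lemma succ_mod (m t : ℕ) (hm : 0 < m) :
    (t + 1) % m = if t % m = m - 1 then 0 else t % m + 1 := by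
  have ht := Nat.mod_lt t hm
  have h0 : (t + 1) % m = (t % m + 1) % m := by
    conv_lhs => rw [← Nat.mod_add_mod]
  by_cases h : t % m = m - 1
  · rw [if_pos h, h0, h, show m - 1 + 1 = m by omega, Nat.mod_self]
  · rw [if_neg h, h0, Nat.mod_eq_of_lt (by omega)]

lemma rotFun_desc {a b k x : ℕ} (h : rotFun a b k (x + 1) < rotFun a b k x) :
    a ≤ x ∧ x + 1 ≤ b ∧ (x - a + k) % (b - a + 1) = b - a := by
  by_cases hx : a ≤ x ∧ x ≤ b
  · by_cases hx1 : x + 1 ≤ b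
    · rw [rotFun_in hx.1 hx.2, rotFun_in (by omega) hx1] at h
      refine ⟨hx.1, hx1, ?_⟩
      have he : x + 1 - a = (x - a) + 1 := by omega
      rw [he] at h
      have hs := succ_mod (b - a + 1) (x - a + k) (by omega)
      have ht := Nat.mod_lt (x - a + k) (show 0 < b - a + 1 by omega)
      by_cases hc : (x - a + k) % (b - a + 1) = b - a + 1 - 1
      · omega
      · rw [show x - a + 1 + k = (x - a + k) + 1 by omega, hs, if_neg hc] at h
        omega
    · -- x = b, x+1 outside
      have hb : x = b := by omega
      have h1 : rotFun a b k (x+1) = x + 1 := rotFun_out (by omega)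
      have h2 := rotFun_mem (k := k) hx.1 hx.2
      omega
  · rw [rotFun_out hx] at h
    by_cases hy : a ≤ x + 1 ∧ x + 1 ≤ b
    · have h2 := rotFun_mem (k := k) hy.1 hy.2
      omega
    · rw [rotFun_out hy] at h; omega

lemma chain_lt (g : ℕ → ℕ) : ∀ j i, i < j → (∀ t, i ≤ t → t < j → g t < g (t + 1)) →
    g i < g j := by
  intro j
  induction j with
  | zero => omega
  | succ j ih =>
    intro i hij h
    rcases Nat.lt_or_ge i j with hj | hj
    · have h1 := ih i hj (fun t ht ht' => h t ht (by omega))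
      have h2 := h j (by omega) (by omega)
      omega
    · have : i = j := by omega
      subst this; exact h i le_rfl (by omega)

lemma chain_le (g : ℕ → ℕ) (i j : ℕ) (hij : i ≤ j)
    (h : ∀ t, i ≤ t → t < j → g t < g (t + 1)) : g i ≤ g j := by
  rcases Nat.eq_or_lt_of_le hij with rfl | hlt
  · exact le_rfl
  · exact (chain_lt g j i hlt h).le

lemma chain_add (g : ℕ → ℕ) : ∀ j i, i ≤ j → (∀ t, i ≤ t → t < j → g t < g (t + 1)) →
    g i + (j - i) ≤ g j := by
  intro j
  induction j with
  | zero => intro i h _; interval_cases i; simp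
  | succ j ih =>
    intro i hij h
    rcases Nat.lt_or_ge i (j+1) with hj | hj
    · have h1 := ih i (by omega) (fun t ht ht' => h t ht (by omega))
      have h2 := h j (by omega) (by omega)
      omega
    · have : i = j + 1 := by omega
      subst this; simp

section Struct

variable {n : ℕ} {g : ℕ → ℕ} {d : ℕ}

/-- strictly increasing (below n) implies identity -/
lemma id_of_mono (hlt : ∀ i, i < n → g i < n)
    (h : ∀ t, t + 1 < n → g t < g (t + 1)) : ∀ i, i < n → g i = i := by
  have hge : ∀ i, i < n → i ≤ g i := by
    intro i
    induction i with
    | zero => omega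
    | succ i ih => intro hi; have := ih (by omega); have := h i (by omega); omega
  have hle : ∀ c i, i < n → n - i ≤ c + 1 → g i ≤ i := by
    intro c
    induction c with
    | zero => intro i hi hc; have := hlt i hi; omega
    | succ c ih =>
      intro i hi hc
      rcases Nat.lt_or_ge (i+1) n with h1 | h1
      · have := ih (i+1) h1 (by omega); have := h i h1; omega
      · have := hlt i hi; omega
  intro i hi
  have := hge i hi; have := hle n i hi (by omega); omega

variable (hlt : ∀ i, i < n → g i < n)
  (hinj : ∀ i j, i < n → j < n → g i = g j → i = j)
  (hsurj : ∀ v, v < n → ∃ i, i < n ∧ g i = v)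
  (hd : d + 1 < n)
  (hdesc : g (d + 1) < g d)
  (h1 : ∀ t, t < d → g t < g (t + 1))
  (h2 : ∀ t, d < t → t + 1 < n → g t < g (t + 1))

include hinj hd hdesc h1 in
/-- For a permutation-like g with unique descent at d, g d > d. -/
lemma SL1 : d < g d := by
  have hge : ∀ i, i ≤ d → i ≤ g i := by
    intro i
    induction i with
    | zero => omega
    | succ i ih => intro hi; have := ih (by omega); have := h1 i (by omega); omega
  have hged := hge d le_rfl
  rcases Nat.eq_or_lt_of_le hged with heq | hlt'
  · -- g d = d : contradiction
    exfalso
    have hfix : ∀ i, i ≤ d → g i = i := by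
      intro i hi
      have := hge i hi
      have := chain_add g d i hi (fun t ht ht' => h1 t (by omega))
      omega
    have hv : g (d + 1) < d := by omega
    have := hfix (g (d+1)) (by omega)
    have := hinj (g (d+1)) (d+1) (by omega) (by omega) this
    omega
  · exact hlt'

include hlt hinj hsurj hd hdesc h1 h2 in
/-- everything above g d is fixed -/
lemma SL2 : ∀ j, g d < j → j < n → g j = j := by
  have hbd := SL1 hinj hd hdesc h1
  have hle : ∀ c i, d < i → i < n → n - i ≤ c + 1 → g i ≤ i := by
    intro c
    induction c with
    | zero => intro i hi hi' hc; have := hlt i hi'; omega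
    | succ c ih =>
      intro i hi hi' hc
      rcases Nat.lt_or_ge (i+1) n with hn | hn
      · have := ih (i+1) (by omega) hn (by omega); have := h2 i hi hn; omega
      · have := hlt i hi'; omega
  have key : ∀ c j, g d < j → j < n → n - j ≤ c + 1 → g j = j := by
    intro c
    induction c with
    | zero =>
      intro j hj hj' hc
      have hle1 := hle n j (by omega) hj' (by omega)
      rcases Nat.eq_or_lt_of_le hle1 with heq | hlt'
      · exact heq
      · exfalso
        obtain ⟨p, hp, hgp⟩ := hsurj j hj'
        have hpj : p ≠ j := fun h => by subst h; omega
        have hpn : p < n := hp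
        -- p > j impossible: j = n-1
        have hpj2 : p < j := by omega
        rcases Nat.lt_or_ge d p with hdp | hdp
        · have := chain_lt g j p hpj2 (fun t ht ht' => h2 t (by omega) (by omega))
          omega
        · have := chain_le g p d hdp (fun t ht ht' => h1 t (by omega))
          omega
    | succ c ih =>
      intro j hj hj' hc
      have hle1 := hle n j (by omega) hj' (by omega)
      rcases Nat.eq_or_lt_of_le hle1 with heq | hlt'
      · exact heq
      · exfalso
        obtain ⟨p, hp, hgp⟩ := hsurj j hj'
        have hpj : p ≠ j := fun h => by subst h; omega
        rcases Nat.lt_or_ge j p with hjp | hjp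
        · have := ih p (by omega) hp (by omega); omega
        · have hpj2 : p < j := by omega
          rcases Nat.lt_or_ge d p with hdp | hdp
          · have := chain_lt g j p hpj2 (fun t ht ht' => h2 t (by omega) (by omega))
            omega
          · have := chain_le g p d hdp (fun t ht ht' => h1 t (by omega))
            omega
  intro j hj hj'
  exact key n j hj hj' (by omega)

include h1 in
lemma SLge : ∀ i, i ≤ d → i ≤ g i := by
  intro i
  induction i with
  | zero => omega
  | succ i ih => intro hi; have := ih (by omega); have := h1 i (by omega); omega

include hlt h2 in
lemma SLle : ∀ i, d < i → i < n → g i ≤ i := by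
  have key : ∀ c i, d < i → i < n → n - i ≤ c + 1 → g i ≤ i := by
    intro c
    induction c with
    | zero => intro i hi hi' hc; have := hlt i hi'; omega
    | succ c ih =>
      intro i hi hi' hc
      rcases Nat.lt_or_ge (i+1) n with hn | hn
      · have := ih (i+1) (by omega) hn (by omega); have := h2 i hi hn; omega
      · have := hlt i hi'; omega
  intro i hi hi'
  exact key n i hi hi' (by omega)

end Struct
/-- Main structure lemma: a non-identity Grassmannian permutation (as a function
on ℕ) whose square is Grassmannian is a cyclic shift on an interval. -/
lemma main_structure {n : ℕ} (g : ℕ → ℕ)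
    (hlt : ∀ i, i < n → g i < n)
    (hinj : ∀ i j, i < n → j < n → g i = g j → i = j)
    (hsurj : ∀ v, v < n → ∃ i, i < n ∧ g i = v)
    (hdes : ∀ i j, i + 1 < n → g (i+1) < g i → j + 1 < n → g (j+1) < g j → i = j)
    (hdes2 : ∀ i j, i + 1 < n → g (g (i+1)) < g (g i) → j + 1 < n →
      g (g (j+1)) < g (g j) → i = j)
    (hne : ∃ i, i < n ∧ g i ≠ i) :
    ∃ a c b : ℕ, a < c ∧ c ≤ b ∧ b < n ∧ ∀ x, x < n → g x = rotFun a b (c - a) x := by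
  -- there is a descent
  have hex : ∃ d, d + 1 < n ∧ g (d+1) < g d := by
    by_contra hcon
    push_neg at hcon
    have hmono : ∀ t, t + 1 < n → g t < g (t + 1) := by
      intro t ht
      have h1 := hcon t ht
      rcases Nat.lt_or_ge (g t) (g (t+1)) with h | h
      · exact h
      · have : g t = g (t+1) := by omega
        have := hinj t (t+1) (by omega) ht this
        omega
    obtain ⟨i, hi, hgi⟩ := hne
    exact hgi (id_of_mono hlt hmono i hi)
  obtain ⟨d, hd, hdesc⟩ := hex
  have h1 : ∀ t, t < d → g t < g (t + 1) := by
    intro t ht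
    have htn : t + 1 < n := by omega
    rcases Nat.lt_or_ge (g t) (g (t+1)) with h | h
    · exact h
    · rcases Nat.eq_or_lt_of_le h with heq | hlt'
      · have := hinj (t+1) t htn (by omega) heq; omega
      · have := hdes t d htn hlt' hd hdesc; omega
  have h2 : ∀ t, d < t → t + 1 < n → g t < g (t + 1) := by
    intro t ht htn
    rcases Nat.lt_or_ge (g t) (g (t+1)) with h | h
    · exact h
    · rcases Nat.eq_or_lt_of_le h with heq | hlt'
      · have := hinj (t+1) t htn (by omega) heq; omega
      · have := hdes t d htn hlt' hd hdesc; omega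
  obtain ⟨b, hbdef⟩ : ∃ x, x = g d := ⟨_, rfl⟩
  have hb : d < b := by rw [hbdef]; exact SL1 hinj hd hdesc h1
  have hbn : b < n := by rw [hbdef]; exact hlt d (by omega)
  have fix_above : ∀ j, b < j → j < n → g j = j := by
    rw [hbdef]; exact SL2 hlt hinj hsurj hd hdesc h1 h2
  have hge := SLge h1
  have hle := SLle hlt h2
  obtain ⟨a, hadef⟩ : ∃ x, x = g (d+1) := ⟨_, rfl⟩
  have han : a < n := by rw [hadef]; exact hlt (d+1) hd
  -- a ≤ d
  have haled : a ≤ d := by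
    by_contra hcon
    have ha1 : a = d + 1 := by have := hle (d+1) (by omega) hd; omega
    have hfixB : ∀ t, d + 1 + t < n → g (d+1+t) = d+1+t := by
      intro t
      induction t with
      | zero => intro _; simp only [Nat.add_zero]; omega
      | succ t ih =>
        intro htn
        have e1 := ih (by omega)
        have e2 := h2 (d+1+t) (by omega) (by omega)
        have e3 := hle (d+1+t+1) (by omega) (by omega)
        have e4 : d+1+(t+1) = d+1+t+1 := by omega
        rw [e4]; omega
    have hgb : g b = b := by
      have := hfixB (b - d - 1) (by omega)
      have heq : d + 1 + (b - d - 1) = b := by omega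
      rwa [heq] at this
    have := hinj d b (by omega) hbn (by rw [hgb, hbdef])
    omega
  -- everything below a is fixed
  have fix_below : ∀ N i, i < N → i < a → g i = i := by
    intro N
    induction N with
    | zero => omega
    | succ N ih =>
      intro i hiN hia
      have hgei : i ≤ g i := hge i (by omega)
      rcases Nat.eq_or_lt_of_le hgei with heq | hlt'
      · omega
      · exfalso
        obtain ⟨p, hp, hgp⟩ := hsurj i (by omega)
        rcases Nat.lt_trichotomy p i with hpi | hpi | hpi
        · have := ih p (by omega) (by omega); omega
        · rw [hpi] at hgp; omega
        · rcases le_or_gt p d with hpd | hpd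
          · have := chain_lt g p i hpi (fun t ht ht' => h1 t (by omega))
            omega
          · have := chain_le g (d+1) p (by omega) (fun t ht ht' => h2 t (by omega) (by omega))
            omega
  have fix_below' : ∀ i, i < a → g i = i := fun i hi => fix_below (i+1) i (by omega) hi
  have cap : ∀ i, i ≤ d → g i + (d - i) ≤ b := by
    intro i hi
    rw [hbdef]
    exact chain_add g d i hi (fun t ht ht' => h1 t (by omega))
  have low : ∀ j, d + 1 ≤ j → j < n → a + (j - (d+1)) ≤ g j := by
    intro j hj hjn
    rw [hadef]
    exact chain_add g j (d+1) hj (fun t ht ht' => h2 t (by omega) (by omega))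
  obtain ⟨k, hkdef⟩ : ∃ x, x = b - d := ⟨_, rfl⟩
  have hk : 1 ≤ k := by omega
  have hcapa : g a ≤ a + k := by have := cap a haled; omega
  by_cases hca : g a = a + k
  · -- rotation case
    have Apart : ∀ t, a + t ≤ d → g (a + t) = a + t + k := by
      intro t
      induction t with
      | zero => intro _; simpa using hca
      | succ t ih =>
        intro htd
        have e1 := ih (by omega)
        have e2 := h1 (a+t) (by omega)
        have e3 := cap (a+t+1) (by omega)
        have e4 : a + (t+1) = a + t + 1 := by omega
        rw [e4]; omega
    have ApartI : ∀ i, a ≤ i → i ≤ d → g i = i + k := by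
      intro i hai hid
      have := Apart (i - a) (by omega)
      have heq : a + (i - a) = i := by omega
      rwa [heq] at this
    have Bpart : ∀ N t, t < N → d + 1 + t ≤ b → g (d + 1 + t) = a + t := by
      intro N
      induction N with
      | zero => omega
      | succ N ih =>
        intro t htN htb
        obtain ⟨p, hp, hgp⟩ := hsurj (a + t) (by omega)
        rcases Nat.lt_or_ge p a with hpa | hpa
        · exfalso; have := fix_below' p hpa; omega
        rcases le_or_gt p d with hpd | hpd
        · exfalso; have := ApartI p hpa hpd; omega
        rcases Nat.lt_or_ge b p with hbp | hbp
        · exfalso; have := fix_above p hbp hp; omega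
        -- d < p ≤ b
        rcases Nat.lt_trichotomy (p - d - 1) t with hpt | hpt | hpt
        · exfalso
          have := ih (p - d - 1) (by omega) (by omega)
          have heq : d + 1 + (p - d - 1) = p := by omega
          rw [heq] at this
          omega
        · have heq : d + 1 + t = p := by omega
          rw [heq]; omega
        · exfalso
          have hc := chain_lt g p (d+1+t) (by omega)
            (fun t0 ht0 ht0' => h2 t0 (by omega) (by omega))
          have := low (d+1+t) (by omega) (by omega)
          omega
    refine ⟨a, a + k, b, by omega, by omega, hbn, ?_⟩
    intro x hx
    rcases Nat.lt_or_ge x a with hxa | hxa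
    · rw [fix_below' x hxa, rotFun_out (by omega)]
    rcases le_or_gt x d with hxd | hxd
    · rw [ApartI x hxa hxd, rotFun_in hxa (by omega)]
      have hm : x - a + (a + k - a) < b - a + 1 := by omega
      rw [Nat.mod_eq_of_lt hm]
      omega
    rcases le_or_gt x b with hxb | hxb
    · have hB := Bpart (x - d) (x - d - 1) (by omega) (by omega)
      have heq : d + 1 + (x - d - 1) = x := by omega
      rw [heq] at hB
      rw [hB, rotFun_in (by omega) hxb]
      have hge1 : b - a + 1 ≤ x - a + (a + k - a) := by omega
      rw [Nat.mod_eq_sub_mod hge1]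
      have hlt1 : x - a + (a + k - a) - (b - a + 1) < b - a + 1 := by omega
      rw [Nat.mod_eq_of_lt hlt1]
      omega
    · rw [fix_above x hxb hx, rotFun_out (by omega)]
  · -- contradiction case
    exfalso
    have hcal : g a < a + k := by omega
    have glowb : a + (b - (d+1)) ≤ g b := low b (by omega) hbn
    have gb_le : g b ≤ b := hle b hb hbn
    have gb_ne : g b ≠ b := by
      intro h
      have := hinj b d hbn (by omega) (by rw [h, hbdef])
      omega
    have ga_ne_gb : g a ≠ g b := by
      intro h
      have := hinj a b han hbn h
      omega
    have key : g a < g b := by omega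
    have e1 : g (g d) = g b := by rw [← hbdef]
    have e2 : g (g (d+1)) = g a := by rw [← hadef]
    have hdescσ : g (g (d+1)) < g (g d) := by rw [e1, e2]; exact key
    have σlt : ∀ i, i < n → g (g i) < n := fun i hi => hlt _ (hlt i hi)
    have σinj : ∀ i j, i < n → j < n → g (g i) = g (g j) → i = j := by
      intro i j hi hj h
      exact hinj i j hi hj (hinj _ _ (hlt i hi) (hlt j hj) h)
    have σsurj : ∀ v, v < n → ∃ i, i < n ∧ g (g i) = v := by
      intro v hv
      obtain ⟨p, hp, hgp⟩ := hsurj v hv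
      obtain ⟨q, hq, hgq⟩ := hsurj p hp
      exact ⟨q, hq, by rw [hgq, hgp]⟩
    have h1σ : ∀ t, t < d → g (g t) < g (g (t + 1)) := by
      intro t ht
      have htn : t + 1 < n := by omega
      rcases Nat.lt_or_ge (g (g t)) (g (g (t+1))) with h | h
      · exact h
      · rcases Nat.eq_or_lt_of_le h with heq | hlt'
        · have := σinj (t+1) t htn (by omega) heq; omega
        · have := hdes2 t d htn hlt' hd hdescσ; omega
    have h2σ : ∀ t, d < t → t + 1 < n → g (g t) < g (g (t + 1)) := by
      intro t ht htn
      rcases Nat.lt_or_ge (g (g t)) (g (g (t+1))) with h | h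
      · exact h
      · rcases Nat.eq_or_lt_of_le h with heq | hlt'
        · have := σinj (t+1) t htn (by omega) heq; omega
        · have := hdes2 t d htn hlt' hd hdescσ; omega
    have hσd : d < g (g d) := SL1 (g := fun i => g (g i)) σinj hd hdescσ h1σ
    have fix_aboveσ : ∀ j, g (g d) < j → j < n → g (g j) = j :=
      SL2 (g := fun i => g (g i)) σlt σinj σsurj hd hdescσ h1σ h2σ
    have hσb : g (g b) = b := by
      apply fix_aboveσ b _ hbn
      rw [e1]; omega
    have hgbd : g b = d := by
      apply hinj (g b) d (hlt b hbn) (by omega)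
      rw [hσb, hbdef]
    rw [e1] at hσd
    omega
def gOf {n : ℕ} (π : Equiv.Perm (Fin n)) : ℕ → ℕ :=
  fun i => if h : i < n then (π ⟨i, h⟩ : ℕ) else i

lemma gOf_lt {n : ℕ} (π : Equiv.Perm (Fin n)) (i : ℕ) (hi : i < n) : gOf π i < n := by
  simp only [gOf, dif_pos hi]
  exact (π ⟨i, hi⟩).isLt

lemma gOf_val {n : ℕ} (π : Equiv.Perm (Fin n)) (x : Fin n) : gOf π (x : ℕ) = (π x : ℕ) := by
  simp only [gOf, dif_pos x.isLt]

lemma gOf_inj {n : ℕ} (π : Equiv.Perm (Fin n)) (i j : ℕ) (hi : i < n) (hj : j < n)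
    (h : gOf π i = gOf π j) : i = j := by
  simp only [gOf, dif_pos hi, dif_pos hj] at h
  have := π.injective (Fin.val_injective h)
  exact congrArg Fin.val this

lemma gOf_surj {n : ℕ} (π : Equiv.Perm (Fin n)) (v : ℕ) (hv : v < n) :
    ∃ i, i < n ∧ gOf π i = v := by
  refine ⟨(π.symm ⟨v, hv⟩ : ℕ), (π.symm ⟨v, hv⟩).isLt, ?_⟩
  rw [gOf_val]
  simp

lemma gOf_sq {n : ℕ} (π : Equiv.Perm (Fin n)) (i : ℕ) :
    gOf (π * π) i = gOf π (gOf π i) := by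
  by_cases hi : i < n
  · rw [show gOf (π * π) i = ((π * π) ⟨i, hi⟩ : ℕ) from by simp [gOf, dif_pos hi]]
    rw [show gOf π i = (π ⟨i, hi⟩ : ℕ) from by simp [gOf, dif_pos hi]]
    rw [gOf_val]
    simp [Equiv.Perm.mul_apply]
  · have h2 : ¬ (gOf π i < n) := by simp [gOf, dif_neg hi]; omega
    simp [gOf, dif_neg hi, dif_neg h2]

lemma des_mem {n : ℕ} (π : Equiv.Perm (Fin n)) (i : Fin n) :
    (i ∈ Finset.univ.filter
      (fun i : Fin n => ∃ j : Fin n, (j : ℕ) = (i : ℕ) + 1 ∧ π j < π i))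
    ↔ ((i : ℕ) + 1 < n ∧ gOf π ((i : ℕ) + 1) < gOf π (i : ℕ)) := by
  simp only [Finset.mem_filter, Finset.mem_univ, true_and]
  constructor
  · rintro ⟨j, hj, hlt⟩
    have hn : (i : ℕ) + 1 < n := hj ▸ j.isLt
    refine ⟨hn, ?_⟩
    rw [gOf_val, show ((i:ℕ)+1) = ((j : Fin n) : ℕ) from hj.symm, gOf_val]
    exact hlt
  · rintro ⟨hn, hlt⟩
    refine ⟨⟨(i:ℕ)+1, hn⟩, rfl, ?_⟩
    rw [gOf_val] at hlt
    rw [show gOf π ((i:ℕ)+1) = (π ⟨(i:ℕ)+1, hn⟩ : ℕ) from by simp [gOf, dif_pos hn]] at hlt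
    exact hlt

lemma des_le_one_unique {n : ℕ} (π : Equiv.Perm (Fin n)) (h : des π ≤ 1) :
    ∀ i j, i + 1 < n → gOf π (i+1) < gOf π i → j + 1 < n → gOf π (j+1) < gOf π j → i = j := by
  intro i j hi hdi hj hdj
  have h1 : (⟨i, by omega⟩ : Fin n) ∈ _ := (des_mem π ⟨i, by omega⟩).mpr ⟨hi, hdi⟩
  have h2 : (⟨j, by omega⟩ : Fin n) ∈ _ := (des_mem π ⟨j, by omega⟩).mpr ⟨hj, hdj⟩
  have := Finset.card_le_one.mp h _ h1 _ h2
  exact congrArg Fin.val this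

/-- If a permutation is given by rotFun, it has at most one descent. -/
lemma des_le_one_of_rot {n a b k : ℕ} (π : Equiv.Perm (Fin n))
    (h : ∀ x : Fin n, (π x : ℕ) = rotFun a b k x) : des π ≤ 1 := by
  have hg : ∀ x, x < n → gOf π x = rotFun a b k x := by
    intro x hx
    rw [show gOf π x = (π ⟨x, hx⟩ : ℕ) from by simp [gOf, dif_pos hx], h ⟨x, hx⟩]
  apply Finset.card_le_one.mpr
  intro x hx y hy
  rw [des_mem] at hx hy
  obtain ⟨hx1, hx2⟩ := hx
  obtain ⟨hy1, hy2⟩ := hy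
  rw [hg _ hx1, hg _ (by omega : (x:ℕ) < n)] at hx2
  rw [hg _ hy1, hg _ (by omega : (y:ℕ) < n)] at hy2
  have dx := rotFun_desc hx2
  have dy := rotFun_desc hy2
  have : (x : ℕ) = (y : ℕ) := by
    have := mod_cancel (m := b - a + 1) (k := k) (u := (x:ℕ) - a) (v := (y:ℕ) - a)
      (by omega) (by omega) (by rw [dx.2.2, dy.2.2])
    omega
  exact Fin.val_injective this
noncomputable def rotPerm (n a b k : ℕ) (hb : b < n) : Equiv.Perm (Fin n) :=
  Equiv.ofBijective
    (fun x => ⟨rotFun a b k x, by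
      by_cases h : a ≤ (x:ℕ) ∧ (x:ℕ) ≤ b
      · have := rotFun_mem (k := k) h.1 h.2; omega
      · rw [rotFun_out h]; exact x.isLt⟩)
    ((Finite.injective_iff_bijective).mp (by
      intro x y h
      exact Fin.val_injective (rotFun_inj (congrArg Fin.val h))))

lemma rotPerm_val (n a b k : ℕ) (hb : b < n) (x : Fin n) :
    ((rotPerm n a b k hb) x : ℕ) = rotFun a b k (x : ℕ) := rfl

lemma rotPerm_sq_val (n a b k : ℕ) (hb : b < n) (x : Fin n) :
    ((rotPerm n a b k hb * rotPerm n a b k hb) x : ℕ) = rotFun a b (k + k) (x : ℕ) := by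
  rw [Equiv.Perm.mul_apply, rotPerm_val, rotPerm_val, rotFun_comp]

lemma rotPerm_des (n a b k : ℕ) (hb : b < n) : des (rotPerm n a b k hb) ≤ 1 :=
  des_le_one_of_rot _ (rotPerm_val n a b k hb)

lemma rotPerm_sq_des (n a b k : ℕ) (hb : b < n) :
    des (rotPerm n a b k hb * rotPerm n a b k hb) ≤ 1 :=
  des_le_one_of_rot _ (rotPerm_sq_val n a b k hb)

lemma rotFun_ne_self {a b k x : ℕ} (hk : 1 ≤ k) (hkm : k ≤ b - a)
    (h1 : a ≤ x) (h2 : x ≤ b) : rotFun a b k x ≠ x := by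
  rw [rotFun_in h1 h2]
  intro h
  have hxa : (x - a + k) % (b - a + 1) = x - a := by omega
  have hmod : (x - a + k) % (b - a + 1) = (x - a) % (b - a + 1) := by
    rw [hxa, Nat.mod_eq_of_lt (by omega)]
  have hdvd : (b - a + 1) ∣ k := by
    have h3 : (x - a + k) ≡ (x - a) [MOD (b - a + 1)] := hmod
    have h4 : (x - a) + k ≡ (x - a) + 0 [MOD (b - a + 1)] := by
      simpa [Nat.add_comm] using h3
    have := Nat.ModEq.add_left_cancel' (x - a) h4
    exact (Nat.modEq_zero_iff_dvd).mp this
  have := Nat.le_of_dvd (by omega) hdvd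
  omega

lemma rotPerm_support (n a b k : ℕ) (hb : b < n) (hk : 1 ≤ k) (hkm : k ≤ b - a) (x : Fin n) :
    (rotPerm n a b k hb) x ≠ x ↔ (a ≤ (x:ℕ) ∧ (x:ℕ) ≤ b) := by
  constructor
  · intro h
    by_contra hc
    exact h (Fin.val_injective (by rw [rotPerm_val, rotFun_out hc]))
  · intro h hc
    exact rotFun_ne_self hk hkm h.1 h.2 (by rw [← rotPerm_val n a b k hb, hc])

/-- counting pairs a < c in range m -/
lemma card_pairs : ∀ m : ℕ,
    ((Finset.range m ×ˢ Finset.range m).filter fun p : ℕ × ℕ => p.1 < p.2).card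
      = m.choose 2 := by
  intro m
  induction m with
  | zero => simp
  | succ m ih =>
    have hsplit : ((Finset.range (m+1) ×ˢ Finset.range (m+1)).filter
        fun p : ℕ × ℕ => p.1 < p.2)
        = ((Finset.range m ×ˢ Finset.range m).filter fun p : ℕ × ℕ => p.1 < p.2)
          ∪ (Finset.range m).image (fun a => (a, m)) := by
      ext ⟨x, y⟩
      simp only [Finset.mem_filter, Finset.mem_product, Finset.mem_range, Finset.mem_union,
        Finset.mem_image, Prod.mk.injEq]
      constructor
      · rintro ⟨⟨hx, hy⟩, hxy⟩
        rcases Nat.lt_or_ge y m with h | h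
        · exact Or.inl ⟨⟨by omega, h⟩, hxy⟩
        · exact Or.inr ⟨x, by omega, rfl, by omega⟩
      · rintro (⟨⟨hx, hy⟩, hxy⟩ | ⟨z, hz, rfl, rfl⟩)
        · exact ⟨⟨by omega, by omega⟩, hxy⟩
        · exact ⟨⟨by omega, by omega⟩, hz⟩
    rw [hsplit, Finset.card_union_of_disjoint, ih, Finset.card_image_of_injective _
      (fun u v huv => by simpa using congrArg Prod.fst huv), Finset.card_range]
    · have hc : (m+1).choose 2 = m.choose 1 + m.choose 2 := Nat.choose_succ_succ m 1
      rw [Nat.choose_one_right] at hc; omega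
    · rw [Finset.disjoint_right]
      rintro ⟨x, y⟩ hmem hmem2
      simp only [Finset.mem_image] at hmem
      simp only [Finset.mem_filter, Finset.mem_product, Finset.mem_range] at hmem2
      obtain ⟨z, hz, heq⟩ := hmem
      have := congrArg Prod.snd heq
      simp only at this
      omega

/-- counting triples a < c ≤ b in range m -/
lemma card_triples : ∀ m : ℕ,
    ((Finset.range m ×ˢ Finset.range m ×ˢ Finset.range m).filter
      fun t : ℕ × ℕ × ℕ => t.1 < t.2.1 ∧ t.2.1 ≤ t.2.2).card = (m+1).choose 3 := by
  intro m
  induction m with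
  | zero => simp [show Nat.choose 1 3 = 0 from rfl]
  | succ m ih =>
    have hsplit : ((Finset.range (m+1) ×ˢ Finset.range (m+1) ×ˢ Finset.range (m+1)).filter
        fun t : ℕ × ℕ × ℕ => t.1 < t.2.1 ∧ t.2.1 ≤ t.2.2)
        = ((Finset.range m ×ˢ Finset.range m ×ˢ Finset.range m).filter
            fun t : ℕ × ℕ × ℕ => t.1 < t.2.1 ∧ t.2.1 ≤ t.2.2)
          ∪ (((Finset.range (m+1) ×ˢ Finset.range (m+1)).filter
              fun p : ℕ × ℕ => p.1 < p.2).image (fun p => (p.1, p.2, m))) := by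
      ext ⟨x, y, z⟩
      simp only [Finset.mem_filter, Finset.mem_product, Finset.mem_range, Finset.mem_union,
        Finset.mem_image, Prod.mk.injEq]
      constructor
      · rintro ⟨⟨hx, hy, hz⟩, hxy, hyz⟩
        rcases Nat.lt_or_ge z m with h | h
        · exact Or.inl ⟨⟨by omega, by omega, h⟩, hxy, hyz⟩
        · exact Or.inr ⟨(x, y), ⟨⟨hx, hy⟩, hxy⟩, rfl, rfl, by omega⟩
      · rintro (⟨⟨hx, hy, hz⟩, hxy, hyz⟩ | ⟨⟨u, v⟩, ⟨⟨hu, hv⟩, huv⟩, heq1, heq2, heq3⟩)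
        · exact ⟨⟨by omega, by omega, by omega⟩, hxy, hyz⟩
        · refine ⟨⟨?_, ?_, ?_⟩, ?_, ?_⟩ <;> omega
    rw [hsplit, Finset.card_union_of_disjoint, ih, Finset.card_image_of_injective _
      (fun u v huv => by
        have h1 := congrArg Prod.fst huv
        have h2 := congrArg (Prod.fst ∘ Prod.snd) huv
        simp only at h1 h2
        exact Prod.ext h1 h2), card_pairs (m+1)]
    · have hc : (m+1+1).choose 3 = (m+1).choose 2 + (m+1).choose 3 := Nat.choose_succ_succ (m+1) 2
      omega
    · rw [Finset.disjoint_right]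
      rintro ⟨x, y, z⟩ hmem hmem2
      simp only [Finset.mem_image] at hmem
      simp only [Finset.mem_filter, Finset.mem_product, Finset.mem_range] at hmem2
      obtain ⟨p, hp, heq⟩ := hmem
      have := congrArg (fun t : ℕ × ℕ × ℕ => t.2.2) heq
      simp only at this
      omega
lemma rotFun_zero (x : ℕ) : rotFun 0 0 0 x = x := by
  unfold rotFun
  split
  · omega
  · rfl

lemma des_one {n : ℕ} : des (1 : Equiv.Perm (Fin n)) ≤ 1 :=
  des_le_one_of_rot 1 (fun x => by rw [rotFun_zero]; rfl)

theorem final_count (n : ℕ) :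
    (Finset.univ.filter (fun π : Equiv.Perm (Fin n) =>
        des π ≤ 1 ∧ des (π * π) ≤ 1)).card = (n + 1).choose 3 + 1 := by
  classical
  set P : Finset (Fin n × Fin n × Fin n) :=
    Finset.univ.filter (fun t => (t.1 : ℕ) < (t.2.1 : ℕ) ∧ (t.2.1 : ℕ) ≤ (t.2.2 : ℕ)) with hP
  set F : Fin n × Fin n × Fin n → Equiv.Perm (Fin n) :=
    fun t => rotPerm n (t.1 : ℕ) (t.2.2 : ℕ) ((t.2.1 : ℕ) - (t.1 : ℕ)) t.2.2.isLt with hF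
  have hmemP : ∀ t : Fin n × Fin n × Fin n, t ∈ P ↔
      ((t.1 : ℕ) < (t.2.1 : ℕ) ∧ (t.2.1 : ℕ) ≤ (t.2.2 : ℕ)) := by
    intro t; simp [hP]
  have hFval : ∀ t : Fin n × Fin n × Fin n, ∀ x : Fin n,
      ((F t) x : ℕ) = rotFun (t.1 : ℕ) (t.2.2 : ℕ) ((t.2.1 : ℕ) - (t.1 : ℕ)) (x : ℕ) := by
    intro t x; rfl
  have hSeq : (Finset.univ.filter (fun π : Equiv.Perm (Fin n) =>
      des π ≤ 1 ∧ des (π * π) ≤ 1)) = insert 1 (P.image F) := by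
    ext π
    simp only [Finset.mem_filter, Finset.mem_univ, true_and, Finset.mem_insert,
      Finset.mem_image]
    constructor
    · rintro ⟨hd1, hd2⟩
      by_cases hπ : π = 1
      · exact Or.inl hπ
      · right
        have hne : ∃ i, i < n ∧ gOf π i ≠ i := by
          have hex : ∃ x : Fin n, π x ≠ x := by
            by_contra hc; push_neg at hc; exact hπ (Equiv.ext hc)
          obtain ⟨x, hx⟩ := hex
          exact ⟨(x : ℕ), x.isLt, by
            rw [gOf_val]; exact fun h => hx (Fin.val_injective h)⟩
        have hsq := des_le_one_unique (π * π) hd2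
        have hdes2 : ∀ i j, i + 1 < n → gOf π (gOf π (i+1)) < gOf π (gOf π i) → j + 1 < n →
            gOf π (gOf π (j+1)) < gOf π (gOf π j) → i = j := by
          intro i j hi h2i hj h2j
          exact hsq i j hi (by rw [gOf_sq, gOf_sq]; exact h2i)
            hj (by rw [gOf_sq, gOf_sq]; exact h2j)
        obtain ⟨a, c, b, hac, hcb, hbn, hform⟩ := main_structure (gOf π) (gOf_lt π)
          (gOf_inj π) (gOf_surj π) (des_le_one_unique π hd1) hdes2 hne
        refine ⟨(⟨a, by omega⟩, ⟨c, by omega⟩, ⟨b, hbn⟩), ?_, ?_⟩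
        · rw [hmemP]; exact ⟨hac, hcb⟩
        · apply Equiv.ext
          intro x
          apply Fin.val_injective
          rw [hFval]
          simp only
          rw [← gOf_val π x, hform (x : ℕ) x.isLt]
    · rintro (rfl | ⟨t, htP, rfl⟩)
      · exact ⟨des_one, by rw [mul_one]; exact des_one⟩
      · exact ⟨des_le_one_of_rot _ (hFval t), by
          rw [hF]
          exact rotPerm_sq_des n _ _ _ _⟩
  rw [hSeq]
  have hsupp : ∀ t ∈ P, ∀ x : Fin n, (F t) x ≠ x ↔ ((t.1 : ℕ) ≤ (x:ℕ) ∧ (x:ℕ) ≤ (t.2.2 : ℕ)) := by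
    intro t ht x
    rw [hmemP] at ht
    rw [hF]
    exact rotPerm_support n _ _ _ _ (by omega) (by omega) x
  have h1nm : (1 : Equiv.Perm (Fin n)) ∉ P.image F := by
    intro hmem
    obtain ⟨t, ht, hFt⟩ := Finset.mem_image.mp hmem
    have ht' := (hmemP t).mp ht
    have := (hsupp t ht t.1).mpr ⟨le_rfl, by omega⟩
    rw [hFt] at this
    exact this rfl
  rw [Finset.card_insert_of_notMem h1nm]
  have hinjF : Set.InjOn F P := by
    intro t ht t' ht' hFeq
    have ht1 := (hmemP t).mp ht
    have ht1' := (hmemP t').mp ht'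
    have hs : ∀ x : Fin n, ((t.1 : ℕ) ≤ (x:ℕ) ∧ (x:ℕ) ≤ (t.2.2 : ℕ)) ↔
        ((t'.1 : ℕ) ≤ (x:ℕ) ∧ (x:ℕ) ≤ (t'.2.2 : ℕ)) := by
      intro x
      rw [← hsupp t ht x, ← hsupp t' ht' x, hFeq]
    have e1 := (hs t.1).mp ⟨le_rfl, by omega⟩
    have e2 := (hs t'.1).mpr ⟨le_rfl, by omega⟩
    have e3 := (hs t.2.2).mp ⟨by omega, le_rfl⟩
    have e4 := (hs t'.2.2).mpr ⟨by omega, le_rfl⟩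
    have ha : (t.1 : ℕ) = (t'.1 : ℕ) := by omega
    have hb : (t.2.2 : ℕ) = (t'.2.2 : ℕ) := by omega
    have hc : (t.2.1 : ℕ) = (t'.2.1 : ℕ) := by
      have hv := congrArg (fun σ : Equiv.Perm (Fin n) => (σ t.1 : ℕ)) hFeq
      rw [hFval, hFval] at hv
      rw [rotFun_in le_rfl (by omega), rotFun_in (by omega) (by omega)] at hv
      have m1 : (t.1:ℕ) - (t.1:ℕ) + ((t.2.1:ℕ) - (t.1:ℕ)) < (t.2.2:ℕ) - (t.1:ℕ) + 1 := by omega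
      have m2 : (t.1:ℕ) - (t'.1:ℕ) + ((t'.2.1:ℕ) - (t'.1:ℕ)) < (t'.2.2:ℕ) - (t'.1:ℕ) + 1 := by
        omega
      rw [Nat.mod_eq_of_lt m1, Nat.mod_eq_of_lt m2] at hv
      omega
    have hfin : t.1 = t'.1 := Fin.val_injective ha
    have hfin2 : t.2.1 = t'.2.1 := Fin.val_injective hc
    have hfin3 : t.2.2 = t'.2.2 := Fin.val_injective hb
    exact Prod.ext hfin (Prod.ext hfin2 hfin3)
  rw [Finset.card_image_of_injOn hinjF]
  have hcardP : P.card = (n + 1).choose 3 := by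
    rw [← card_triples n]
    apply Finset.card_bij' (i := fun (t : Fin n × Fin n × Fin n) _ =>
        ((t.1 : ℕ), (t.2.1 : ℕ), (t.2.2 : ℕ)))
      (j := fun (t : ℕ × ℕ × ℕ) ht =>
        ((⟨t.1, by
            simp only [Finset.mem_filter, Finset.mem_product, Finset.mem_range] at ht
            exact ht.1.1⟩ : Fin n),
         (⟨t.2.1, by
            simp only [Finset.mem_filter, Finset.mem_product, Finset.mem_range] at ht
            exact ht.1.2.1⟩ : Fin n),
         (⟨t.2.2, by
            simp only [Finset.mem_filter, Finset.mem_product, Finset.mem_range] at ht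
            exact ht.1.2.2⟩ : Fin n)))
    case hi =>
      intro t ht
      have := (hmemP t).mp ht
      simp only [Finset.mem_filter, Finset.mem_product, Finset.mem_range]
      exact ⟨⟨t.1.isLt, t.2.1.isLt, t.2.2.isLt⟩, this⟩
    case hj =>
      intro t ht
      simp only [Finset.mem_filter, Finset.mem_product, Finset.mem_range] at ht
      rw [hmemP]
      exact ht.2
    case left_inv => intro t ht; simp
    case right_inv => intro t ht; rfl
  rw [hcardP]

/-- The number of Grassmannian permutations whose square is Grassmannian is `C(n+1,3) + 1`. -/
theorem count_grassmannian_with_grassmannian_square (n : ℕ) (hn : 2 ≤ n) :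
    (Finset.univ.filter (fun π : Equiv.Perm (Fin n) =>
        des π ≤ 1 ∧ des (π * π) ≤ 1)).card = (n + 1).choose 3 + 1 :=
  final_count n
end

section
/- If n is odd and π is a Grassmannian permutation of {1,...,n} that is an involution with π(1) ≠ 1 and π(n) ≠ n, then no such π exists (the set of such permutations is empty). -/
/-- For odd `n`, there is no Grassmannian involution with `π(1) ≠ 1` and `π(n) ≠ n`. -/
theorem no_grassmannian_involution_no_fixed_ends_of_odd (n : ℕ) (hodd : Odd n) :
    ¬ ∃ π : Equiv.Perm (Fin n),
      des π ≤ 1 ∧ π * π = 1 ∧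
      π ⟨0, by obtain ⟨k, hk⟩ := hodd; omega⟩ ≠ ⟨0, by obtain ⟨k, hk⟩ := hodd; omega⟩ ∧
      π ⟨n - 1, by obtain ⟨k, hk⟩ := hodd; omega⟩ ≠
        ⟨n - 1, by obtain ⟨k, hk⟩ := hodd; omega⟩ := by
  rintro ⟨π, hdes, hinv, h0, hn⟩
  obtain ⟨k, hk⟩ := hodd
  have hn0 : 0 < n := by omega
  have hπ2 : ∀ x : Fin n, π (π x) = x := by
    intro x
    have := congrArg (fun σ : Equiv.Perm (Fin n) => σ x) hinv
    simpa [Equiv.Perm.mul_apply] using this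
  set g : ℕ → ℕ := fun i => if h : i < n then ((π ⟨i, h⟩ : Fin n) : ℕ) else 0 with hgdef
  have hgeq : ∀ i (h : i < n), g i = ((π ⟨i, h⟩ : Fin n) : ℕ) := by
    intro i h; simp [hgdef, h]
  have hglt : ∀ i, i < n → g i < n := by
    intro i h; rw [hgeq i h]; exact (π ⟨i, h⟩).isLt
  have hginv : ∀ i, i < n → g (g i) = i := by
    intro i h
    rw [hgeq i h, hgeq _ ((π ⟨i, h⟩).isLt)]
    simp [hπ2]
  have hginj : ∀ a b, a < n → b < n → g a = g b → a = b := by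
    intro a b ha hb hab
    have := hginv a ha
    rw [hab, hginv b hb] at this
    omega
  have hg0 : g 0 ≠ 0 := by
    intro h
    apply h0
    apply Fin.ext
    have := hgeq 0 hn0
    simp only [this] at h ⊢
    exact h
  have hgn : g (n - 1) ≠ n - 1 := by
    intro h
    apply hn
    apply Fin.ext
    have := hgeq (n-1) (by omega)
    simp only [this] at h ⊢
    exact h
  -- existence of a descent
  have hexd : ∃ i : Fin n, ∃ j : Fin n, (j : ℕ) = (i : ℕ) + 1 ∧ π j < π i := by
    by_contra hno
    push_neg at hno
    have hstep0 : ∀ i, i + 1 < n → g i < g (i + 1) := by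
      intro i hi
      have h1 : i < n := by omega
      have hle : (π ⟨i, h1⟩ : Fin n) ≤ π ⟨i+1, hi⟩ := hno ⟨i, h1⟩ ⟨i + 1, hi⟩ rfl
      have hne : (π ⟨i, h1⟩ : Fin n) ≠ π ⟨i+1, hi⟩ := by
        intro h
        have := π.injective h
        simp [Fin.ext_iff] at this
      rw [hgeq i h1, hgeq (i+1) hi]
      exact Fin.lt_iff_val_lt_val.1 (lt_of_le_of_ne hle hne)
    have hge : ∀ i, i < n → i ≤ g i := by
      intro i
      induction i with
      | zero => omega
      | succ m ih =>
        intro hm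
        have h1 := ih (by omega)
        have h2 := hstep0 m hm
        omega
    have := hge (n - 1) (by omega)
    have := hglt (n - 1) (by omega)
    omega
  obtain ⟨d, j, hj, hlt⟩ := hexd
  have hd1 : (d : ℕ) + 1 < n := hj ▸ j.isLt
  -- uniqueness of the descent
  have hu : ∀ i : Fin n, (∃ j : Fin n, (j : ℕ) = (i : ℕ) + 1 ∧ π j < π i) → i = d := by
    intro i hi
    by_contra hne
    have h2 : 1 < (Finset.univ.filter
        (fun i : Fin n => ∃ j : Fin n, (j : ℕ) = (i : ℕ) + 1 ∧ π j < π i)).card := by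
      refine Finset.one_lt_card.2 ⟨i, ?_, d, ?_, hne⟩
      · simp only [Finset.mem_filter, Finset.mem_univ, true_and]; exact hi
      · simp only [Finset.mem_filter, Finset.mem_univ, true_and]; exact ⟨j, hj, hlt⟩
    unfold des at hdes
    omega
  -- strict increase away from d
  have hstep : ∀ i, i + 1 < n → i ≠ (d : ℕ) → g i < g (i + 1) := by
    intro i hi hne
    have h1 : i < n := by omega
    have hnd : ¬ (π ⟨i+1, hi⟩ : Fin n) < π ⟨i, h1⟩ := by
      intro h
      have := hu ⟨i, h1⟩ ⟨⟨i+1, hi⟩, rfl, h⟩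
      apply hne
      simpa [Fin.ext_iff] using this
    have hle : (π ⟨i, h1⟩ : Fin n) ≤ π ⟨i+1, hi⟩ := not_lt.1 hnd
    have hne2 : (π ⟨i, h1⟩ : Fin n) ≠ π ⟨i+1, hi⟩ := by
      intro h
      have := π.injective h
      simp [Fin.ext_iff] at this
    rw [hgeq i h1, hgeq (i+1) hi]
    exact Fin.lt_iff_val_lt_val.1 (lt_of_le_of_ne hle hne2)
  -- chain monotonicity within a block
  have hchain : ∀ b a, a < b → b < n → ((d : ℕ) < a ∨ b ≤ (d : ℕ)) → g a < g b := by
    intro b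
    induction b with
    | zero => omega
    | succ m ih =>
      intro a ha hbn hside
      rcases Nat.lt_or_ge a m with h | h
      · have h1 : g a < g m := ih a h (by omega) (by omega)
        have h2 : g m < g (m + 1) := hstep m hbn (by omega)
        omega
      · have hm : a = m := by omega
        subst hm
        exact hstep a hbn (by omega)
  -- g d+1 < g d : translate the descent
  have hgd : g ((d : ℕ) + 1) < g (d : ℕ) := by
    have hj' : j = ⟨(d : ℕ) + 1, hd1⟩ := Fin.ext hj
    rw [hj'] at hlt
    rw [hgeq _ hd1, hgeq _ d.isLt]
    exact Fin.lt_iff_val_lt_val.1 hlt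
  -- π(0) > d
  have hfirst0 : (d : ℕ) < g 0 := by
    by_contra hle
    push_neg at hle
    have ha0 : 0 < g 0 := Nat.pos_of_ne_zero hg0
    have := hchain (g 0) 0 ha0 (by omega) (by omega)
    rw [hginv 0 hn0] at this
    omega
  have hfirst : ∀ i, i ≤ (d : ℕ) → (d : ℕ) < g i := by
    intro i hi
    rcases Nat.eq_zero_or_pos i with h | h
    · subst h; exact hfirst0
    · have := hchain i 0 h (by omega) (by omega)
      omega
  -- π(n-1) ≤ d
  have hlast : g (n - 1) ≤ (d : ℕ) := by
    by_contra hgt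
    push_neg at hgt
    set m := g (n - 1) with hm
    have hmn : m < n := hglt (n - 1) (by omega)
    have hmlt : m < n - 1 := by
      rcases Nat.lt_or_ge m (n - 1) with h | h
      · exact h
      · exact absurd (by omega : m = n - 1) hgn
    have := hchain (n - 1) m hmlt (by omega) (by omega)
    rw [hginv (n - 1) (by omega)] at this
    omega
  have hsecond : ∀ jj, (d : ℕ) + 1 ≤ jj → jj < n → g jj ≤ (d : ℕ) := by
    intro jj h1 h2
    rcases Nat.lt_or_ge jj (n - 1) with h | h
    · have := hchain (n - 1) jj h (by omega) (by omega)
      omega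
    · have : jj = n - 1 := by omega
      subst this; exact hlast
  -- counting
  have hc1 : (Finset.range ((d : ℕ) + 1)).card ≤ (Finset.Ico ((d : ℕ) + 1) n).card := by
    apply Finset.card_le_card_of_injOn g
    · intro a ha
      simp only [Finset.mem_coe, Finset.mem_range] at ha
      simp only [Finset.mem_coe, Finset.mem_Ico]
      exact ⟨hfirst a (by omega), hglt a (by omega)⟩
    · intro a ha b hb hab
      simp only [Finset.coe_range, Set.mem_Iio] at ha hb
      exact hginj a b (by omega) (by omega) hab
  have hc2 : (Finset.Ico ((d : ℕ) + 1) n).card ≤ (Finset.range ((d : ℕ) + 1)).card := by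
    apply Finset.card_le_card_of_injOn g
    · intro a ha
      simp only [Finset.mem_coe, Finset.mem_Ico] at ha
      simp only [Finset.mem_coe, Finset.mem_range]
      have := hsecond a ha.1 ha.2
      omega
    · intro a ha b hb hab
      simp only [Finset.coe_Ico, Set.mem_Ico] at ha hb
      exact hginj a b (by omega) (by omega) hab
  rw [Finset.card_range, Nat.card_Ico] at hc1 hc2
  omega
end

section
/- For n ≥ 2, the number of Grassmannian permutations π ∈ S_n with π(1) ≠ 1, π(n) ≠ n, and π² Grassmannian is exactly n−1; namely, these are exactly the permutations π_k = k (k+1) ... n 1 2 ... (k−1) for k ∈ {2,...,n}. -/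
namespace GrassAux

variable {n : ℕ}

abbrev DesAt (π : Equiv.Perm (Fin n)) (i : Fin n) : Prop :=
  ∃ j : Fin n, (j : ℕ) = (i : ℕ) + 1 ∧ π j < π i

lemma mod_helper {x m r : ℕ} (hm : 0 < m) (hx : x < 2 * m) (h : x % m = r) :
    x = r ∨ x = m + r := by
  rcases lt_or_ge x m with h1 | h1
  · left; rwa [Nat.mod_eq_of_lt h1] at h
  · right
    rw [Nat.mod_eq_sub_mod h1, Nat.mod_eq_of_lt (by omega)] at h
    omega

lemma des_le_one_iff {π : Equiv.Perm (Fin n)} :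
    des π ≤ 1 ↔ ∀ i j : Fin n, DesAt π i → DesAt π j → i = j := by
  rw [des, Finset.card_le_one]
  constructor
  · intro h i j hi hj
    exact h i (by simpa [Finset.mem_filter] using hi) j (by simpa [Finset.mem_filter] using hj)
  · intro h i hi j hj
    exact h i j (by simpa [Finset.mem_filter] using hi) (by simpa [Finset.mem_filter] using hj)

lemma desAt_lt {π : Equiv.Perm (Fin n)} {i : Fin n} (h : DesAt π i) : (i : ℕ) + 1 < n := by
  obtain ⟨j, hj, -⟩ := h
  have := j.isLt
  omega

lemma desAt_iff {π : Equiv.Perm (Fin n)} {i : Fin n} (h : (i : ℕ) + 1 < n) :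
    DesAt π i ↔ π ⟨(i : ℕ) + 1, h⟩ < π i := by
  constructor
  · rintro ⟨j, hj, hlt⟩
    have hje : j = ⟨(i : ℕ) + 1, h⟩ := Fin.ext hj
    rwa [hje] at hlt
  · intro hlt
    exact ⟨⟨(i : ℕ) + 1, h⟩, rfl, hlt⟩

lemma le_apply_of_no_descent {π : Equiv.Perm (Fin n)} (h : ∀ i : Fin n, ¬ DesAt π i) :
    ∀ k (hk : k < n), k ≤ (π ⟨k, hk⟩ : ℕ) := by
  intro k
  induction k with
  | zero => intro _; exact Nat.zero_le _
  | succ k ih =>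
    intro hk
    have hk' : k < n := by omega
    have h1 : ¬ π ⟨k + 1, hk⟩ < π ⟨k, hk'⟩ := fun hlt => h ⟨k, hk'⟩ ⟨⟨k + 1, hk⟩, rfl, hlt⟩
    have h2 : π ⟨k + 1, hk⟩ ≠ π ⟨k, hk'⟩ := fun he => by
      have := π.injective he
      simp [Fin.ext_iff] at this
    have h3 : (π ⟨k, hk'⟩ : ℕ) < (π ⟨k + 1, hk⟩ : ℕ) := by
      have := lt_of_le_of_ne (not_lt.mp h1) (Ne.symm h2)
      exact this
    have := ih hk'
    omega


lemma rotation_of_unique_descent (hn : 2 ≤ n) (π : Equiv.Perm (Fin n)) (d : Fin n)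
    (hd : DesAt π d) (huniq : ∀ i, DesAt π i → i = d)
    (hwrap : (π ⟨n - 1, by omega⟩ : ℕ) < (π ⟨0, by omega⟩ : ℕ)) :
    ∀ k (hk : k < n), (π ⟨k, hk⟩ : ℕ) = (k + (π ⟨0, by omega⟩ : ℕ)) % n := by
  haveI : NeZero n := ⟨by omega⟩
  have h0n : 0 < n := by omega
  have hn1 : n - 1 < n := by omega
  have hone : ((1 : Fin n) : ℕ) = 1 := by
    rw [Fin.val_one', Nat.mod_eq_of_lt (by omega)]
  have hadd1 : ∀ i : Fin n, ((i + 1 : Fin n) : ℕ) = ((i : ℕ) + 1) % n := by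
    intro i
    rw [Fin.val_add, hone]
  have hdlt : (d : ℕ) + 1 < n := desAt_lt hd
  -- ascent facts
  have hasc : ∀ i : Fin n, i ≠ d → (π i : ℕ) < (π (i + 1) : ℕ) := by
    intro i hi
    by_cases hc : (i : ℕ) + 1 < n
    · have hnd : ¬ DesAt π i := fun h => hi (huniq i h)
      rw [desAt_iff hc] at hnd
      have hi1 : (i + 1 : Fin n) = ⟨(i : ℕ) + 1, hc⟩ :=
        Fin.ext (by rw [hadd1]; exact Nat.mod_eq_of_lt hc)
      rw [hi1]
      have hne2 : π i ≠ π ⟨(i : ℕ) + 1, hc⟩ := fun he => by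
        have := π.injective he
        simp [Fin.ext_iff] at this
      have hfl : π i < π ⟨(i : ℕ) + 1, hc⟩ := lt_of_le_of_ne (not_lt.mp hnd) hne2
      exact hfl
    · have hiv : (i : ℕ) = n - 1 := by have := i.isLt; omega
      have hiv1 : (i : ℕ) + 1 = n := by omega
      have h01 : (i + 1 : Fin n) = ⟨0, h0n⟩ := Fin.ext (by rw [hadd1, hiv1, Nat.mod_self])
      have hie : i = ⟨n - 1, hn1⟩ := Fin.ext hiv
      rw [h01, hie]
      exact hwrap
  have hdesc : (π (d + 1) : ℕ) < (π d : ℕ) := by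
    have hd1 : (d + 1 : Fin n) = ⟨(d : ℕ) + 1, hdlt⟩ :=
      Fin.ext (by rw [hadd1]; exact Nat.mod_eq_of_lt hdlt)
    rw [hd1]
    exact (desAt_iff hdlt).mp hd
  classical
  set δ : Fin n → ℕ := fun i => ((π (i + 1) : ℕ) + n - (π i : ℕ)) % n with hδ
  have hδ_cast : ∀ i : Fin n,
      (δ i : ℤ) = (π (i + 1) : ℤ) - (π i : ℤ) + (if i = d then (n : ℤ) else 0) := by
    intro i
    by_cases hi : i = d
    · subst hi
      simp only [if_pos rfl, hδ]
      have h2n : (π (i + 1) : ℕ) + n - (π i : ℕ) < n := by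
        have := hdesc; have := (π i).isLt; omega
      rw [Nat.mod_eq_of_lt h2n]
      have hle : (π i : ℕ) ≤ (π (i + 1) : ℕ) + n := by omega
      push_cast [Nat.cast_sub hle]
      ring
    · have hlt : (π i : ℕ) < (π (i + 1) : ℕ) := hasc i hi
      simp only [if_neg hi, hδ]
      have he : (π (i + 1) : ℕ) + n - (π i : ℕ) = ((π (i + 1) : ℕ) - (π i : ℕ)) + n := by omega
      rw [he, Nat.add_mod_right,
        Nat.mod_eq_of_lt (by have := (π (i + 1)).isLt; omega)]
      push_cast [Nat.cast_sub hlt.le]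
      ring
  have hshift : ∑ i : Fin n, ((π (i + 1) : ℕ) : ℤ) = ∑ i : Fin n, ((π i : ℕ) : ℤ) := by
    have := Equiv.sum_comp (Equiv.addRight (1 : Fin n)) (fun j : Fin n => ((π j : ℕ) : ℤ))
    simpa using this
  have hsum : ∑ i : Fin n, (δ i : ℤ) = n := by
    rw [Finset.sum_congr rfl (fun i _ => hδ_cast i), Finset.sum_add_distrib,
      Finset.sum_sub_distrib, hshift]
    simp
  have hsumℕ : ∑ i : Fin n, δ i = n := by
    have h2 : ((∑ i : Fin n, δ i : ℕ) : ℤ) = (n : ℤ) := by push_cast; exact hsum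
    exact_mod_cast h2
  have hsucc_ne : ∀ i : Fin n, (π (i + 1) : ℕ) ≠ (π i : ℕ) := by
    intro i he
    have h1 := π.injective (Fin.ext he)
    have h2 := congrArg Fin.val h1
    rw [hadd1] at h2
    have := i.isLt
    rcases Nat.lt_or_ge ((i : ℕ) + 1) n with h | h
    · rw [Nat.mod_eq_of_lt h] at h2; omega
    · have hin : (i : ℕ) + 1 = n := by omega
      rw [hin, Nat.mod_self] at h2; omega
  have hpos : ∀ i : Fin n, 1 ≤ δ i := by
    intro i
    rcases Nat.eq_zero_or_pos (δ i) with h0 | h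
    · exfalso
      have hx := mod_helper h0n
        (by have := (π (i + 1)).isLt; have := (π i).isLt; omega :
          (π (i + 1) : ℕ) + n - (π i : ℕ) < 2 * n) h0
      have := (π i).isLt
      exact hsucc_ne i (by omega)
    · exact h
  have hall : ∀ i : Fin n, δ i = 1 := by
    intro i
    by_contra hne
    have h2 : 2 ≤ δ i := by have := hpos i; omega
    have hfe : (fun j : Fin n => if j = i then (2 : ℕ) else 1)
        = fun j : Fin n => (if j = i then 1 else 0) + 1 :=
      funext fun j => by by_cases h : j = i <;> simp [h]
    have hval : ∑ j : Fin n, (if j = i then (2 : ℕ) else 1) = n + 1 := by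
      rw [hfe, Finset.sum_add_distrib]
      simp [Finset.card_univ, Nat.add_comm]
    have hle : ∑ j : Fin n, (if j = i then (2 : ℕ) else 1) ≤ ∑ j : Fin n, δ j := by
      refine Finset.sum_le_sum fun j _ => ?_
      by_cases hj : j = i
      · subst hj; simpa using h2
      · simpa [hj] using hpos j
    rw [hsumℕ, hval] at hle
    omega
  have key : ∀ i : Fin n, (π (i + 1) : ℕ) = ((π i : ℕ) + 1) % n := by
    intro i
    have h1 := hall i
    rw [hδ] at h1
    have hx := mod_helper h0n
      (by have := (π (i + 1)).isLt; have := (π i).isLt; omega :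
        (π (i + 1) : ℕ) + n - (π i : ℕ) < 2 * n) h1
    have hlt1 := (π (i + 1)).isLt
    have hlt2 := (π i).isLt
    rcases Nat.lt_or_ge ((π i : ℕ) + 1) n with h | h
    · rw [Nat.mod_eq_of_lt h]; omega
    · have hin : (π i : ℕ) + 1 = n := by omega
      rw [hin, Nat.mod_self]; omega
  -- final induction
  intro k
  induction k with
  | zero =>
    intro hk
    have he : (⟨0, hk⟩ : Fin n) = ⟨0, h0n⟩ := rfl
    rw [he, Nat.zero_add, Nat.mod_eq_of_lt (π ⟨0, h0n⟩).isLt]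
  | succ k ih =>
    intro hk
    have hk' : k < n := by omega
    have hfin : (⟨k + 1, hk⟩ : Fin n) = (⟨k, hk'⟩ : Fin n) + 1 :=
      Fin.ext (by rw [hadd1]; exact (Nat.mod_eq_of_lt hk).symm)
    rw [hfin, key, ih hk', Nat.mod_add_mod]
    congr 1
    omega

lemma forward (hn : 2 ≤ n) (π : Equiv.Perm (Fin n))
    (h1 : des π ≤ 1) (h2 : des (π * π) ≤ 1)
    (h3 : π ⟨0, by omega⟩ ≠ ⟨0, by omega⟩)
    (h4 : π ⟨n - 1, by omega⟩ ≠ ⟨n - 1, by omega⟩) :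
    ∀ i : Fin n, (π i : ℕ) = ((i : ℕ) + (π ⟨0, by omega⟩ : ℕ)) % n := by
  haveI : NeZero n := ⟨by omega⟩
  have h0n : 0 < n := by omega
  have hn1 : n - 1 < n := by omega
  -- step 1: there is a descent
  have hexd : ∃ d : Fin n, DesAt π d := by
    by_contra hno
    rw [not_exists] at hno
    have hge := le_apply_of_no_descent hno (n - 1) hn1
    have hlt := (π ⟨n - 1, hn1⟩).isLt
    have h4' : π ⟨n - 1, hn1⟩ ≠ ⟨n - 1, hn1⟩ := h4
    exact h4' (Fin.ext (by simp only [Fin.val_mk]; omega))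
  obtain ⟨d, hd⟩ := hexd
  have huniq : ∀ i, DesAt π i → i = d := fun i hi => des_le_one_iff.mp h1 i d hi hd
  have hdlt : (d : ℕ) + 1 < n := desAt_lt hd
  -- step 3 : π d = n-1
  have hπd : π d = ⟨n - 1, hn1⟩ := by
    set p := π.symm ⟨n - 1, hn1⟩ with hp
    have hπp : π p = ⟨n - 1, hn1⟩ := π.apply_symm_apply _
    by_cases hcase : (p : ℕ) + 1 < n
    · have hdes : DesAt π p := by
        rw [desAt_iff hcase, Fin.lt_def, hπp]
        have hne : π ⟨(p : ℕ) + 1, hcase⟩ ≠ ⟨n - 1, hn1⟩ := by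
          intro he
          have h5 := π.injective (he.trans hπp.symm)
          have := congrArg Fin.val h5
          simp at this
        have hv : (π ⟨(p : ℕ) + 1, hcase⟩ : ℕ) ≠ n - 1 := fun hv => hne (Fin.ext hv)
        have := (π ⟨(p : ℕ) + 1, hcase⟩).isLt
        simp only [Fin.val_mk]
        omega
      have he := huniq p hdes
      rw [← he, hπp]
    · have hpv : (p : ℕ) = n - 1 := by have := p.isLt; omega
      exfalso
      apply h4
      have he : p = ⟨n - 1, hn1⟩ := Fin.ext hpv
      show π ⟨n - 1, hn1⟩ = ⟨n - 1, hn1⟩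
      exact he ▸ hπp
  -- step 4 : π (d+1) = 0
  have hπd1 : π ⟨(d : ℕ) + 1, hdlt⟩ = ⟨0, h0n⟩ := by
    set p := π.symm ⟨0, h0n⟩ with hp
    have hπp : π p = ⟨0, h0n⟩ := π.apply_symm_apply _
    rcases Nat.eq_zero_or_pos (p : ℕ) with hp0 | hp0
    · exfalso
      apply h3
      have he : p = ⟨0, h0n⟩ := Fin.ext hp0
      show π ⟨0, h0n⟩ = ⟨0, h0n⟩
      exact he ▸ hπp
    · have hplt := p.isLt
      have hdes : DesAt π ⟨(p : ℕ) - 1, by omega⟩ := by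
        refine ⟨p, by simp only [Fin.val_mk]; omega, ?_⟩
        rw [hπp, Fin.lt_def]
        have hne : π ⟨(p : ℕ) - 1, by omega⟩ ≠ ⟨0, h0n⟩ := by
          intro he
          have h5 := π.injective (he.trans hπp.symm)
          have := congrArg Fin.val h5
          simp at this
          omega
        have hv : (π ⟨(p : ℕ) - 1, by omega⟩ : ℕ) ≠ 0 := fun hv => hne (Fin.ext hv)
        simp only [Fin.val_mk]
        omega
      have he := huniq _ hdes
      have hpd : (p : ℕ) = (d : ℕ) + 1 := by
        have := congrArg Fin.val he
        simp at this
        omega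
      have he2 : p = ⟨(d : ℕ) + 1, hdlt⟩ := Fin.ext hpd
      rw [← he2, hπp]
  -- wrap comparison
  have hneq : (π ⟨n - 1, hn1⟩ : ℕ) ≠ (π ⟨0, h0n⟩ : ℕ) := by
    intro he
    have h5 := π.injective (Fin.ext he)
    have := congrArg Fin.val h5
    simp at this
    omega
  rcases lt_or_gt_of_ne hneq with hwrap | hwrap
  · -- case A : rotation
    intro i
    have := rotation_of_unique_descent hn π d hd huniq hwrap (i : ℕ) i.isLt
    rwa [Fin.eta] at this
  · -- case B : contradiction with des (π * π) ≤ 1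
    exfalso
    set σ := π * π with hσ
    have hσd : DesAt σ d := by
      refine ⟨⟨(d : ℕ) + 1, hdlt⟩, rfl, ?_⟩
      show σ ⟨(d : ℕ) + 1, hdlt⟩ < σ d
      simp only [hσ, Equiv.Perm.mul_apply]
      rw [hπd1, hπd, Fin.lt_def]
      exact hwrap
    have huniq2 : ∀ i, DesAt σ i → i = d := fun i hi => des_le_one_iff.mp h2 i d hi hσd
    by_cases h5 : π ⟨n - 1, hn1⟩ = d
    · -- subcase : π (n-1) = d
      have hπ0lt : (π ⟨0, h0n⟩ : ℕ) < (d : ℕ) := by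
        have := congrArg Fin.val h5
        omega
      set r := π.symm ⟨(d : ℕ) + 1, hdlt⟩ with hr
      have hπr : π r = ⟨(d : ℕ) + 1, hdlt⟩ := π.apply_symm_apply _
      have hr0 : (r : ℕ) ≠ 0 := by
        intro hr0
        have he : r = ⟨0, h0n⟩ := Fin.ext hr0
        rw [he] at hπr
        have := congrArg Fin.val hπr
        simp only [Fin.val_mk] at this
        omega
      have hrlt := r.isLt
      have hσr : σ r = ⟨0, h0n⟩ := by
        simp only [hσ, Equiv.Perm.mul_apply, hπr, hπd1]
      have hdes : DesAt σ ⟨(r : ℕ) - 1, by omega⟩ := by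
        refine ⟨r, by simp only [Fin.val_mk]; omega, ?_⟩
        rw [hσr, Fin.lt_def]
        have hne : σ ⟨(r : ℕ) - 1, by omega⟩ ≠ ⟨0, h0n⟩ := by
          intro he
          have h6 := σ.injective (he.trans hσr.symm)
          have := congrArg Fin.val h6
          simp at this
          omega
        have hv : (σ ⟨(r : ℕ) - 1, by omega⟩ : ℕ) ≠ 0 := fun hv => hne (Fin.ext hv)
        simp only [Fin.val_mk]
        omega
      have he := huniq2 _ hdes
      have hrd : (r : ℕ) - 1 = (d : ℕ) := by
        have := congrArg Fin.val he
        simpa using this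
      have he2 : r = ⟨(d : ℕ) + 1, hdlt⟩ := Fin.ext (by simp only [Fin.val_mk]; omega)
      rw [he2, hπd1] at hπr
      have := congrArg Fin.val hπr
      simp at this
    · -- subcase : π (n-1) ≠ d
      set q := π.symm d with hq
      have hπq : π q = d := π.apply_symm_apply _
      have hqne : (q : ℕ) ≠ n - 1 := by
        intro hq0
        apply h5
        have he : q = ⟨n - 1, hn1⟩ := Fin.ext hq0
        rw [← he]
        exact hπq
      have hqlt : (q : ℕ) + 1 < n := by have := q.isLt; omega
      have hσq : σ q = ⟨n - 1, hn1⟩ := by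
        simp only [hσ, Equiv.Perm.mul_apply, hπq, hπd]
      have hdes : DesAt σ q := by
        refine ⟨⟨(q : ℕ) + 1, hqlt⟩, rfl, ?_⟩
        show σ ⟨(q : ℕ) + 1, hqlt⟩ < σ q
        rw [hσq, Fin.lt_def]
        have hne : σ ⟨(q : ℕ) + 1, hqlt⟩ ≠ ⟨n - 1, hn1⟩ := by
          intro he
          have h6 := σ.injective (he.trans hσq.symm)
          have := congrArg Fin.val h6
          simp at this
        have hv : (σ ⟨(q : ℕ) + 1, hqlt⟩ : ℕ) ≠ n - 1 := fun hv => hne (Fin.ext hv)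
        have := (σ ⟨(q : ℕ) + 1, hqlt⟩).isLt
        simp only [Fin.val_mk]
        omega
      have he := huniq2 q hdes
      rw [he, hπd] at hπq
      have := congrArg Fin.val hπq
      simp at this
      omega

lemma des_le_one_of_rot (hn : 2 ≤ n) (π : Equiv.Perm (Fin n)) (c : ℕ)
    (h : ∀ i : Fin n, (π i : ℕ) = ((i : ℕ) + c) % n) : des π ≤ 1 := by
  rw [des_le_one_iff]
  have hkey : ∀ i : Fin n, DesAt π i → ((i : ℕ) + c) % n = n - 1 := by
    intro i hi
    have hlt := desAt_lt hi
    rw [desAt_iff hlt, Fin.lt_def, h, h] at hi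
    simp only [Fin.val_mk] at hi
    by_contra hne
    have hv : ((i : ℕ) + c) % n < n - 1 := by
      have := Nat.mod_lt ((i : ℕ) + c) (show 0 < n by omega)
      omega
    have he : ((i : ℕ) + 1 + c) % n = ((i : ℕ) + c) % n + 1 := by
      rw [show (i : ℕ) + 1 + c = ((i : ℕ) + c) + 1 by ring, Nat.add_mod,
        Nat.mod_eq_of_lt (show 1 < n by omega), Nat.mod_eq_of_lt (by omega)]
    omega
  intro i j hi hj
  have h1 := hkey i hi
  have h2 := hkey j hj
  have h3 : ((i : ℕ) + c) % n = ((j : ℕ) + c) % n := by omega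
  have hmod : (i : ℕ) % n = (j : ℕ) % n := Nat.ModEq.add_right_cancel' c h3
  exact Fin.ext (by rwa [Nat.mod_eq_of_lt i.isLt, Nat.mod_eq_of_lt j.isLt] at hmod)

lemma rot_sq (π : Equiv.Perm (Fin n)) (c : ℕ)
    (h : ∀ i : Fin n, (π i : ℕ) = ((i : ℕ) + c) % n) :
    ∀ i : Fin n, ((π * π) i : ℕ) = ((i : ℕ) + (c + c)) % n := by
  intro i
  rw [Equiv.Perm.mul_apply, h (π i), h i, Nat.mod_add_mod, Nat.add_assoc]

lemma addLeft_val [NeZero n] (c : ℕ) (i : Fin n) :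
    ((Equiv.addLeft (Fin.ofNat n c) i : Fin n) : ℕ) = ((i : ℕ) + c) % n := by
  simp only [Equiv.coe_addLeft]
  rw [Fin.val_add, Fin.val_ofNat, Nat.mod_add_mod, Nat.add_comm]

end GrassAux

/-- For `n ≥ 2`, there are exactly `n−1` Grassmannian permutations `π` with `π(1) ≠ 1`,
`π(n) ≠ n`, and `π²` Grassmannian; they are exactly the rotations
`k (k+1) … n 1 2 … (k−1)` for `k ∈ {2,…,n}`, i.e. (0-indexed) `i ↦ (i + c) mod n`
for `1 ≤ c ≤ n−1`. -/
theorem grassmannian_square_grassmannian_no_fixed_ends (n : ℕ) (hn : 2 ≤ n) :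
    (Finset.univ.filter (fun π : Equiv.Perm (Fin n) =>
        des π ≤ 1 ∧ des (π * π) ≤ 1 ∧
        π ⟨0, by omega⟩ ≠ ⟨0, by omega⟩ ∧
        π ⟨n - 1, by omega⟩ ≠ ⟨n - 1, by omega⟩)).card = n - 1 ∧
    ∀ π : Equiv.Perm (Fin n),
      (des π ≤ 1 ∧ des (π * π) ≤ 1 ∧
        π ⟨0, by omega⟩ ≠ ⟨0, by omega⟩ ∧
        π ⟨n - 1, by omega⟩ ≠ ⟨n - 1, by omega⟩) ↔
      ∃ c : ℕ, 1 ≤ c ∧ c ≤ n - 1 ∧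
        ∀ i : Fin n, (π i : ℕ) = ((i : ℕ) + c) % n := by
  haveI : NeZero n := ⟨by omega⟩
  have h0n : 0 < n := by omega
  have hn1 : n - 1 < n := by omega
  have hiff : ∀ π : Equiv.Perm (Fin n),
      (des π ≤ 1 ∧ des (π * π) ≤ 1 ∧
        π ⟨0, by omega⟩ ≠ ⟨0, by omega⟩ ∧
        π ⟨n - 1, by omega⟩ ≠ ⟨n - 1, by omega⟩) ↔
      ∃ c : ℕ, 1 ≤ c ∧ c ≤ n - 1 ∧
        ∀ i : Fin n, (π i : ℕ) = ((i : ℕ) + c) % n := by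
    intro π
    constructor
    · rintro ⟨h1, h2, h3, h4⟩
      refine ⟨(π ⟨0, h0n⟩ : ℕ), ?_, ?_, ?_⟩
      · rcases Nat.eq_zero_or_pos (π ⟨0, h0n⟩ : ℕ) with h | h
        · exfalso
          have h3' : π ⟨0, h0n⟩ ≠ ⟨0, h0n⟩ := h3
          exact h3' (Fin.ext (by simp only [Fin.val_mk]; omega))
        · exact h
      · have := (π ⟨0, h0n⟩).isLt; omega
      · exact GrassAux.forward hn π h1 h2 h3 h4
    · rintro ⟨c, hc1, hc2, hrot⟩
      refine ⟨GrassAux.des_le_one_of_rot hn π c hrot,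
              GrassAux.des_le_one_of_rot hn (π * π) (c + c) (GrassAux.rot_sq π c hrot),
              ?_, ?_⟩
      · intro he
        have hv := congrArg Fin.val he
        rw [hrot] at hv
        simp only [Fin.val_mk] at hv
        rw [Nat.zero_add, Nat.mod_eq_of_lt (by omega)] at hv
        omega
      · intro he
        have hv := congrArg Fin.val he
        rw [hrot] at hv
        simp only [Fin.val_mk] at hv
        rw [Nat.mod_eq_sub_mod (by omega), Nat.mod_eq_of_lt (by omega)] at hv
        omega
  refine ⟨?_, hiff⟩
  classical
  have himg : (Finset.univ.filter (fun π : Equiv.Perm (Fin n) =>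
        des π ≤ 1 ∧ des (π * π) ≤ 1 ∧
        π ⟨0, by omega⟩ ≠ ⟨0, by omega⟩ ∧
        π ⟨n - 1, by omega⟩ ≠ ⟨n - 1, by omega⟩))
      = (Finset.Icc 1 (n - 1)).image (fun c : ℕ => Equiv.addLeft (Fin.ofNat n c)) := by
    ext π
    simp only [Finset.mem_filter, Finset.mem_univ, true_and, Finset.mem_image,
      Finset.mem_Icc]
    rw [hiff π]
    constructor
    · rintro ⟨c, hc1, hc2, hc⟩
      refine ⟨c, ⟨hc1, hc2⟩, ?_⟩
      ext i
      rw [GrassAux.addLeft_val c i, hc i]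
    · rintro ⟨c, ⟨hc1, hc2⟩, rfl⟩
      exact ⟨c, hc1, hc2, fun i => GrassAux.addLeft_val c i⟩
  rw [himg, Finset.card_image_of_injOn, Nat.card_Icc]
  · omega
  · intro c1 hc1 c2 hc2 he
    simp only [Finset.coe_Icc, Set.mem_Icc] at hc1 hc2
    have hv := congrArg (fun e : Equiv.Perm (Fin n) => ((e ⟨0, h0n⟩ : Fin n) : ℕ)) he
    simp only [GrassAux.addLeft_val, Fin.val_mk, Nat.zero_add] at hv
    rwa [Nat.mod_eq_of_lt (by omega), Nat.mod_eq_of_lt (by omega)] at hv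
end

section
/- If π is a Grassmannian permutation of {1,...,n}, then π³ has at most 7 descents. -/
namespace DesAux

/-- The descent set of a permutation. -/
def Dset {n : ℕ} (ρ : Equiv.Perm (Fin n)) : Finset (Fin n) :=
  Finset.univ.filter
    (fun i : Fin n => ∃ j : Fin n, (j : ℕ) = (i : ℕ) + 1 ∧ ρ j < ρ i)

lemma des_eq {n : ℕ} (ρ : Equiv.Perm (Fin n)) : des ρ = (Dset ρ).card := rfl

lemma mem_Dset {n : ℕ} {ρ : Equiv.Perm (Fin n)} {i : Fin n} :
    i ∈ Dset ρ ↔ ∃ j : Fin n, (j : ℕ) = (i : ℕ) + 1 ∧ ρ j < ρ i := by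
  simp [Dset]

/-- If there is no descent in `[a, b)` then `ρ a ≤ ρ b`. -/
lemma mono_aux {n : ℕ} (ρ : Equiv.Perm (Fin n)) (m : ℕ) :
    ∀ a b : Fin n, (b : ℕ) = (a : ℕ) + m →
      (∀ i ∈ Dset ρ, ¬ (a ≤ i ∧ i < b)) → ρ a ≤ ρ b := by
  induction m with
  | zero =>
    intro a b hb _
    have : a = b := Fin.ext (by omega)
    rw [this]
  | succ m ih =>
    intro a b hb hstep
    have han : (a : ℕ) + 1 < n := by have := b.isLt; omega
    set a' : Fin n := ⟨(a : ℕ) + 1, han⟩ with ha'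
    have hab : a < b := by rw [Fin.lt_def]; omega
    have hna : a ∉ Dset ρ := fun hmem => hstep a hmem ⟨le_rfl, hab⟩
    have h1 : ρ a ≤ ρ a' := by
      by_contra hlt
      exact hna (mem_Dset.mpr ⟨a', rfl, not_le.mp hlt⟩)
    have h2 : ρ a' ≤ ρ b := by
      refine ih a' b (by simp [ha']; omega) ?_
      intro i hi hr
      refine hstep i hi ⟨?_, hr.2⟩
      have := Fin.le_def.mp hr.1
      rw [Fin.le_def]
      simp [ha'] at this
      omega
    exact le_trans h1 h2

lemma key {n : ℕ} (σ τ : Equiv.Perm (Fin n)) (hσ : des σ ≤ 1) :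
    des (σ * τ) ≤ 2 * des τ + 1 := by
  classical
  set C : Finset (Fin n) := Dset (σ * τ) \ Dset τ with hCdef
  have hstep1 : des (σ * τ) ≤ des τ + C.card := by
    rw [des_eq, des_eq]
    have hsub : Dset (σ * τ) ⊆ Dset τ ∪ C := by
      intro x hx
      by_cases hxt : x ∈ Dset τ
      · exact Finset.mem_union_left _ hxt
      · exact Finset.mem_union_right _ (Finset.mem_sdiff.mpr ⟨hx, hxt⟩)
    exact le_trans (Finset.card_le_card hsub) (Finset.card_union_le _ _)
  have hCfact : ∀ i ∈ C, ∃ j : Fin n, (j : ℕ) = (i : ℕ) + 1 ∧ τ i < τ j ∧ σ (τ j) < σ (τ i) := by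
    intro i hi
    rcases Finset.mem_sdiff.mp hi with ⟨hi1, hi2⟩
    rcases mem_Dset.mp hi1 with ⟨j, hj, hlt⟩
    have hlt' : σ (τ j) < σ (τ i) := by simpa [Equiv.Perm.mul_apply] using hlt
    have hτ : τ i < τ j := by
      rcases lt_trichotomy (τ i) (τ j) with h | h | h
      · exact h
      · exact absurd (τ.injective h) (by intro he; rw [he] at hj; omega)
      · exact absurd (mem_Dset.mpr ⟨j, hj, h⟩) hi2
    exact ⟨j, hj, hτ, hlt'⟩
  have hCcard : C.card ≤ des τ + 1 := by
    by_cases hD : Dset σ = ∅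
    · have hCe : C = ∅ := by
        rw [Finset.eq_empty_iff_forall_notMem]
        intro i hi
        rcases hCfact i hi with ⟨j, hj, hτlt, hσlt⟩
        have hmono := mono_aux σ ((τ j : ℕ) - (τ i : ℕ)) (τ i) (τ j)
          (by have := Fin.lt_def.mp hτlt; omega) (by simp [hD])
        exact absurd hmono (not_le.mpr hσlt)
      simp [hCe]
    · obtain ⟨d, hd⟩ := Finset.card_eq_one.mp
        (le_antisymm (des_eq σ ▸ hσ)
          (Finset.card_pos.mpr (Finset.nonempty_iff_ne_empty.mpr hD)))
      have cross : ∀ i ∈ C, ∃ j : Fin n, (j : ℕ) = (i : ℕ) + 1 ∧ τ i ≤ d ∧ d < τ j := by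
        intro i hi
        rcases hCfact i hi with ⟨j, hj, hτlt, hσlt⟩
        by_contra hcon
        have hmono := mono_aux σ ((τ j : ℕ) - (τ i : ℕ)) (τ i) (τ j)
          (by have := Fin.lt_def.mp hτlt; omega) ?_
        · exact absurd hmono (not_le.mpr hσlt)
        · intro x hx hr
          have hxd : x = d := by
            have := hd ▸ hx
            exact Finset.mem_singleton.mp this
          exact hcon ⟨j, hj, hxd ▸ hr.1, hxd ▸ hr.2⟩
      set f : Fin n → WithBot (Fin n) :=
        fun i => ((Dset τ).filter (fun x => x < i)).max with hfdef
      have hmono : ∀ x ∈ C, ∀ y ∈ C, x < y → f x < f y := by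
        intro x hx y hy hxy
        obtain ⟨jx, hjx, _, hdjx⟩ := cross x hx
        obtain ⟨jy, hjy, hyd, _⟩ := cross y hy
        have hjxy : (jx : ℕ) < (y : ℕ) := by
          have hle : (jx : ℕ) ≤ (y : ℕ) := by
            have := Fin.lt_def.mp hxy; omega
          rcases lt_or_eq_of_le hle with h | h
          · exact h
          · exfalso
            have : jx = y := Fin.ext h
            rw [this] at hdjx
            exact absurd hyd (not_le.mpr hdjx)
        have hex : ∃ jd ∈ Dset τ, jx ≤ jd ∧ jd < y := by
          by_contra hcon
          push_neg at hcon
          have hmono2 := mono_aux τ ((y : ℕ) - (jx : ℕ)) jx y (by omega) ?_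
          · exact absurd hmono2 (not_le.mpr (lt_of_le_of_lt hyd hdjx))
          · intro i hi hr
            exact absurd hr.2 (not_lt.mpr (hcon i hi hr.1))
        obtain ⟨jd, hjd, hjd1, hjd2⟩ := hex
        have hhy : (jd : WithBot (Fin n)) ≤ f y :=
          Finset.le_max (Finset.mem_filter.mpr ⟨hjd, hjd2⟩)
        have hxjd : x < jd := by
          rw [Fin.lt_def]
          have := Fin.le_def.mp hjd1
          omega
        have hhx : f x < (jd : WithBot (Fin n)) := by
          rcases hm : ((Dset τ).filter (fun z => z < x)).max with _ | m
          · show ((Dset τ).filter (fun z => z < x)).max < (jd : WithBot (Fin n))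
            rw [hm]
            exact WithBot.bot_lt_coe _
          · have hmem := Finset.mem_of_max hm
            have hmx : m < x := (Finset.mem_filter.mp hmem).2
            show ((Dset τ).filter (fun z => z < x)).max < (jd : WithBot (Fin n))
            rw [hm]
            exact WithBot.coe_lt_coe.mpr (lt_trans hmx hxjd)
        exact lt_of_lt_of_le hhx hhy
      have hinj : Set.InjOn f C := by
        intro x hx y hy hxy
        by_contra hne
        rcases Ne.lt_or_gt hne with h | h
        · exact absurd hxy (ne_of_lt (hmono x (by simpa using hx) y (by simpa using hy) h))
        · exact absurd hxy.symm (ne_of_lt (hmono y (by simpa using hy) x (by simpa using hx) h))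
      have hmaps : ∀ i ∈ C, f i ∈
          insert (⊥ : WithBot (Fin n))
            ((Dset τ).image (fun x : Fin n => WithBot.some x)) := by
        intro i _
        rcases hm : ((Dset τ).filter (fun z => z < i)).max with _ | m
        · show ((Dset τ).filter (fun z => z < i)).max ∈ _
          rw [hm]
          exact Finset.mem_insert_self _ _
        · have hmem := Finset.mem_of_max hm
          show ((Dset τ).filter (fun z => z < i)).max ∈ _
          rw [hm]
          exact Finset.mem_insert_of_mem
            (Finset.mem_image.mpr ⟨m, (Finset.mem_filter.mp hmem).1, rfl⟩)
      calc C.card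
          ≤ (insert (⊥ : WithBot (Fin n))
              ((Dset τ).image (fun x : Fin n => WithBot.some x))).card :=
            Finset.card_le_card_of_injOn f hmaps hinj
        _ ≤ ((Dset τ).image (fun x : Fin n => WithBot.some x)).card + 1 :=
            Finset.card_insert_le _ _
        _ ≤ des τ + 1 := by
            rw [des_eq]
            exact Nat.add_le_add_right Finset.card_image_le 1
  omega

end DesAux

/-- The cube of a Grassmannian permutation has at most 7 descents. -/
theorem cube_of_grassmannian_has_at_most_seven_descents
    {n : ℕ} (π : Equiv.Perm (Fin n)) (h : des π ≤ 1) :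
    des (π ^ 3) ≤ 7 := by
  have h2 : des (π * π) ≤ 2 * des π + 1 := DesAux.key π π h
  have h3 : des (π * (π * π)) ≤ 2 * des (π * π) + 1 := DesAux.key π (π * π) h
  have hp : π ^ 3 = π * (π * π) := by
    rw [pow_succ, pow_succ, pow_one, mul_assoc]
  rw [hp]
  omega
end

section
/- Let π ∈ S_n with π² equal to the permutation n 1 2 ... (n−1) in one-line notation (i.e., π²(1) = n and π²(i) = i−1 for i ≥ 2). Then n is odd, and π is given in one-line notation by ((n+1)/2)((n+1)/2+1)...(n−1) n 1 2 ... ((n+1)/2 − 1); in particular such π is unique. -/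
/-- If `π² = n 1 2 … (n−1)` (in one-line notation), then `n` is odd and `π` is the
explicitly given (unique) permutation. All indices and values are 0-indexed on `Fin n`. -/
theorem square_root_of_n_cycle (n : ℕ) (hn : 1 ≤ n) (π : Equiv.Perm (Fin n))
    (h : ∀ i : Fin n, ((π * π) i : ℕ) = if (i : ℕ) = 0 then n - 1 else (i : ℕ) - 1) :
    Odd n ∧ ∀ i : Fin n, (π i : ℕ) =
      if (i : ℕ) < (n + 1) / 2 then (i : ℕ) + (n + 1) / 2 - 1
      else (i : ℕ) - (n + 1) / 2 := by
  have npos : 0 < n := hn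
  set c : ℕ := (π ⟨0, npos⟩ : ℕ) with hc
  have hclt : c < n := (π ⟨0, npos⟩).isLt
  have hcomm : ∀ j : Fin n, π ((π * π) j) = (π * π) (π j) := by
    intro j
    simp [Equiv.Perm.mul_apply]
  have hstep : ∀ a : ℕ, (a + 1) % n = (a % n + 1) % n := by
    intro a
    conv_lhs => rw [← Nat.mod_add_div a n]
    rw [show a % n + n * (a / n) + 1 = (a % n + 1) + n * (a / n) by ring,
      Nat.add_mul_mod_self_left]
  have key : ∀ i : Fin n, (π i : ℕ) = ((i : ℕ) + c) % n := by
    intro i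
    obtain ⟨iv, hiv⟩ := i
    induction iv with
    | zero =>
      simpa using (Nat.mod_eq_of_lt hclt).symm
    | succ k ih =>
      have hk : k < n := Nat.lt_of_succ_lt hiv
      have ihk := ih hk
      have h1 : (π * π) ⟨k + 1, hiv⟩ = ⟨k, hk⟩ := by
        have := h ⟨k + 1, hiv⟩
        simp at this
        exact Fin.ext this
      have h2 : π ⟨k, hk⟩ = (π * π) (π ⟨k + 1, hiv⟩) := by
        rw [← h1, hcomm]
      have h3 := h (π ⟨k + 1, hiv⟩)
      set p : ℕ := (π ⟨k + 1, hiv⟩ : ℕ) with hp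
      have hplt : p < n := (π ⟨k + 1, hiv⟩).isLt
      have h4 : (k + c) % n = if p = 0 then n - 1 else p - 1 := by
        rw [← ihk, h2, h3]
      show p = (k + 1 + c) % n
      have h5 : (k + 1 + c) % n = ((k + c) % n + 1) % n := by
        rw [show k + 1 + c = (k + c) + 1 by ring, hstep]
      by_cases hp0 : p = 0
      · rw [if_pos hp0] at h4
        rw [hp0, h5, h4, show n - 1 + 1 = n by omega, Nat.mod_self]
      · rw [if_neg hp0] at h4
        rw [h5, h4, show p - 1 + 1 = p by omega, Nat.mod_eq_of_lt hplt]
  have h2c : (c + c) % n = n - 1 := by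
    have := h ⟨0, npos⟩
    simp only [Equiv.Perm.mul_apply] at this
    rw [key (π ⟨0, npos⟩), ← hc] at this
    simpa using this
  have hcc : c + c = n - 1 := by
    rcases lt_or_ge (c + c) n with h' | h'
    · rwa [Nat.mod_eq_of_lt h'] at h2c
    · rw [Nat.mod_eq_sub_mod h', Nat.mod_eq_of_lt (by omega)] at h2c
      omega
  refine ⟨⟨c, by omega⟩, ?_⟩
  intro i
  have hhalf : (n + 1) / 2 = c + 1 := by omega
  have hilt : (i : ℕ) < n := i.isLt
  rw [key i, hhalf]
  split_ifs with hi
  · rw [Nat.mod_eq_of_lt (by omega)]; omega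
  · rw [Nat.mod_eq_sub_mod (by omega), Nat.mod_eq_of_lt (by omega)]; omega
end

section
/- Let π ∈ S_n and suppose π² has exactly one descent, at position i. Then π²(i) ≥ π²(i+1) + 2 (the descent has size at least 2). -/
private lemma card_filter_val_lt (n c : ℕ) (hc : c ≤ n) :
    (Finset.univ.filter (fun v : Fin n => (v : ℕ) < c)).card = c := by
  have : (Finset.univ.filter (fun v : Fin n => (v : ℕ) < c)).card
      = (Finset.univ : Finset (Fin c)).card := by
    refine Finset.card_bij' (fun v hv => (⟨(v : ℕ), ?_⟩ : Fin c))
      (fun w _ => (⟨(w : ℕ), lt_of_lt_of_le w.isLt hc⟩ : Fin n)) ?_ ?_ ?_ ?_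
    · simp only [Finset.mem_filter] at hv; exact hv.2
    · intros; exact Finset.mem_univ _
    · intro w _; simp [w.isLt]
    · intro a ha; rfl
    · intro w hw; rfl
  simpa using this

private lemma card_filter_apply_lt {n : ℕ} (σ : Equiv.Perm (Fin n)) (c : ℕ) :
    (Finset.univ.filter (fun m : Fin n => ((σ m : ℕ)) < c)).card
      = (Finset.univ.filter (fun v : Fin n => (v : ℕ) < c)).card := by
  apply Finset.card_bij (fun m _ => σ m)
  · intro m hm
    simp only [Finset.mem_filter, Finset.mem_univ, true_and] at hm ⊢
    exact hm
  · intro a _ b _ h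
    exact σ.injective h
  · intro v hv
    refine ⟨σ.symm v, ?_, by simp⟩
    simp only [Finset.mem_filter, Finset.mem_univ, true_and, Equiv.apply_symm_apply] at hv ⊢
    exact hv

/-- If `π²` has exactly one descent, at position `i`, then `π²(i) ≥ π²(i+1) + 2`. -/
theorem square_descent_size_at_least_two (n : ℕ) (π : Equiv.Perm (Fin n))
    (h1 : des (π * π) = 1) (i j : Fin n) (hj : (j : ℕ) = (i : ℕ) + 1)
    (hd : (π * π) j < (π * π) i) :
    ((π * π) j : ℕ) + 2 ≤ ((π * π) i : ℕ) := by
  set σ := π * π with hσ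
  by_contra hcon
  push_neg at hcon
  have hji : (σ j : ℕ) < (σ i : ℕ) := hd
  have heq : (σ i : ℕ) = (σ j : ℕ) + 1 := by omega
  have hij : i ≠ j := fun h => by rw [h] at hj; omega
  have hin : (i : ℕ) + 1 < n := hj ▸ j.isLt
  -- injectivity on values
  have hinj : ∀ a b : Fin n, a ≠ b → (σ a : ℕ) ≠ (σ b : ℕ) := by
    intro a b hab h
    exact hab (σ.injective (Fin.ext h))
  -- the descent set is {i}
  have hsingle : Finset.univ.filter
      (fun a : Fin n => ∃ b : Fin n, (b : ℕ) = (a : ℕ) + 1 ∧ σ b < σ a) = {i} := by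
    obtain ⟨a, ha⟩ := Finset.card_eq_one.mp h1
    have hmem : i ∈ Finset.univ.filter
        (fun a : Fin n => ∃ b : Fin n, (b : ℕ) = (a : ℕ) + 1 ∧ σ b < σ a) := by
      simp only [Finset.mem_filter, Finset.mem_univ, true_and]
      exact ⟨j, hj, hd⟩
    rw [ha] at hmem ⊢
    rw [Finset.mem_singleton] at hmem
    rw [hmem]
  -- no descent away from i
  have hstep : ∀ a b : Fin n, (b : ℕ) = (a : ℕ) + 1 → a ≠ i → (σ a : ℕ) < (σ b : ℕ) := by
    intro a b hb hai
    rcases lt_trichotomy ((σ a : ℕ)) ((σ b : ℕ)) with h | h | h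
    · exact h
    · exact absurd h (hinj a b (fun hh => by rw [hh] at hb; omega))
    · exfalso
      have : a ∈ Finset.univ.filter
          (fun a : Fin n => ∃ b : Fin n, (b : ℕ) = (a : ℕ) + 1 ∧ σ b < σ a) := by
        simp only [Finset.mem_filter, Finset.mem_univ, true_and]
        exact ⟨b, hb, h⟩
      rw [hsingle, Finset.mem_singleton] at this
      exact hai this
  -- monotone chains avoiding i
  have chain : ∀ k : ℕ, ∀ a b : Fin n, (b : ℕ) = (a : ℕ) + k →
      (∀ t : ℕ, (a : ℕ) ≤ t → t < (b : ℕ) → t ≠ (i : ℕ)) →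
      (σ a : ℕ) + k ≤ (σ b : ℕ) := by
    intro k
    induction k with
    | zero =>
      intro a b hb _
      have : a = b := Fin.ext (by omega)
      rw [this]; omega
    | succ k ih =>
      intro a b hb ht
      have hbn : (a : ℕ) + k < n := by have := b.isLt; omega
      set c : Fin n := ⟨(a : ℕ) + k, hbn⟩ with hc
      have hcv : (c : ℕ) = (a : ℕ) + k := rfl
      have h1' := ih a c hcv (fun t h1 h2 => ht t h1 (by omega))
      have hci : c ≠ i := by
        intro h
        exact ht ((a : ℕ) + k) (by omega) (by omega) (by rw [← h])
      have h2' := hstep c b (by omega) hci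
      omega
  -- values before i are below σ j
  have low : ∀ m : Fin n, (m : ℕ) < (i : ℕ) → (σ m : ℕ) + ((i : ℕ) - (m : ℕ)) ≤ (σ j : ℕ) := by
    intro m hm
    have hpn : (i : ℕ) - 1 < n := by omega
    set p : Fin n := ⟨(i : ℕ) - 1, hpn⟩ with hp
    have hpv : (p : ℕ) = (i : ℕ) - 1 := rfl
    have h1' := chain ((i : ℕ) - 1 - (m : ℕ)) m p (by omega)
      (fun t h1 h2 => by omega)
    have hpi : p ≠ i := fun h => by
      have := congrArg Fin.val h; omega
    have h2' := hstep p i (by omega) hpi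
    have h3' : (σ p : ℕ) ≠ (σ j : ℕ) := hinj p j (fun h => by
      have := congrArg Fin.val h; omega)
    omega
  -- values after j are above σ i
  have high : ∀ m : Fin n, (j : ℕ) < (m : ℕ) → (σ i : ℕ) + ((m : ℕ) - (j : ℕ)) ≤ (σ m : ℕ) := by
    intro m hm
    have hqn : (j : ℕ) + 1 < n := by have := m.isLt; omega
    set q : Fin n := ⟨(j : ℕ) + 1, hqn⟩ with hq
    have hqv : (q : ℕ) = (j : ℕ) + 1 := rfl
    have h1' := hstep j q hqv (fun h => by rw [h] at hj; omega)
    have hqi : (σ q : ℕ) ≠ (σ i : ℕ) := hinj q i (fun h => by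
      have := congrArg Fin.val h; omega)
    have h2' := chain ((m : ℕ) - ((j : ℕ) + 1)) q m (by omega)
      (fun t h1 h2 => by omega)
    omega
  -- σ j = i (as values)
  have hSj : (σ j : ℕ) = (i : ℕ) := by
    have hset : Finset.univ.filter (fun m : Fin n => ((σ m : ℕ)) < (σ j : ℕ))
        = Finset.univ.filter (fun m : Fin n => (m : ℕ) < (i : ℕ)) := by
      ext m
      simp only [Finset.mem_filter, Finset.mem_univ, true_and]
      constructor
      · intro hm
        by_contra hmi
        push_neg at hmi
        rcases lt_trichotomy ((m : ℕ)) ((j : ℕ)) with h | h | h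
        · have : m = i := Fin.ext (by omega)
          rw [this] at hm; omega
        · have : m = j := Fin.ext h
          rw [this] at hm; omega
        · have := high m h; omega
      · intro hm
        have := low m hm; omega
    have hc1 := card_filter_apply_lt σ ((σ j : ℕ))
    rw [hset] at hc1
    rw [card_filter_val_lt n ((σ j : ℕ)) (le_of_lt (σ j).isLt)] at hc1
    rw [card_filter_val_lt n ((i : ℕ)) (le_of_lt i.isLt)] at hc1
    exact hc1.symm
  have hSi : (σ i : ℕ) = (j : ℕ) := by omega
  -- σ fixes everything else
  have hfix : ∀ m : Fin n, m ≠ i → m ≠ j → (σ m : ℕ) = (m : ℕ) := by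
    intro m hmi hmj
    rcases lt_trichotomy ((m : ℕ)) ((i : ℕ)) with h | h | h
    · have hup := low m h
      have hz : (0 : ℕ) < n := by omega
      have hlow := chain ((m : ℕ)) ⟨0, hz⟩ m (by show (m : ℕ) = 0 + (m : ℕ); omega)
        (fun t h1 h2 => by omega)
      omega
    · exact absurd (Fin.ext h) hmi
    · have hmj' : (j : ℕ) < (m : ℕ) := by
        rcases Nat.lt_or_ge ((j : ℕ)) ((m : ℕ)) with h' | h'
        · exact h'
        · exact absurd (Fin.ext (by omega)) hmj
      have hlow := high m hmj'
      have hln : n - 1 < n := by omega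
      have hup := chain (n - 1 - (m : ℕ)) m ⟨n - 1, hln⟩
        (by show n - 1 = (m : ℕ) + (n - 1 - (m : ℕ)); omega)
        (fun t h1 h2 => by omega)
      have := (σ ⟨n - 1, hln⟩).isLt
      omega
  -- hence σ = swap i j
  have hswap : σ = Equiv.swap i j := by
    apply Equiv.ext
    intro m
    rcases eq_or_ne m i with rfl | hmi
    · rw [Equiv.swap_apply_left]
      exact Fin.ext hSi
    · rcases eq_or_ne m j with rfl | hmj
      · rw [Equiv.swap_apply_right]
        exact Fin.ext hSj
      · rw [Equiv.swap_apply_of_ne_of_ne hmi hmj]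
        exact Fin.ext (hfix m hmi hmj)
  -- sign contradiction
  have hs1 : Equiv.Perm.sign σ = 1 := by
    rw [hσ, map_mul, Int.units_mul_self]
  rw [hswap, Equiv.Perm.sign_swap hij] at hs1
  exact absurd hs1 (by decide)
end
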